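/- arXiv:2304.07582 — 14 statements merged into one kernel-verified Lean document; each statement's English description precedes it below -/
import Mathlib

section
/- Let G be a group, A a finite alphabet, and X ⊆ A^G a G-SFT. Then there exist a finite subset F ⊆ G and an SFT Y on the subgroup H = ⟨F⟩ generated by F (i.e., Y ⊆ A^H is an H-SFT) such that X equals the free G-extension Y^↑G of Y. -/
open scoped Pointwise symmDiff

namespace LFPaper

variable {G A B : Type*}

/-- The right shift action: `(shift g x) h = x (h * g)`. -/
def shift [Group G] (g : G) (x : G → A) : G → A := fun h => x (h * g)

/-- Restriction of a configuration to a finite shape. -/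
def restrictF (F : Finset G) (x : G → A) : F → A := fun a => x a

/-- A `G`-shift space: a closed, shift-invariant subset of the full shift. -/
def IsShiftSpace [Group G] [TopologicalSpace A] (X : Set (G → A)) : Prop :=
  IsClosed X ∧ ∀ g : G, ∀ x ∈ X, shift g x ∈ X

/-- A `G`-shift of finite type: the set of configurations avoiding a finite
set of forbidden patterns on a finite shape. -/
def IsSFT [Group G] (X : Set (G → A)) : Prop :=
  ∃ (F : Finset G) (P : Set (F → A)),
    X = {x : G → A | ∀ g : G, restrictF F (shift g x) ∉ P}

/-- The `F`-language of `X`: all restrictions of elements of `X` to `F`. -/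
def language (X : Set (G → A)) (F : Finset G) : Set (F → A) :=
  {w | ∃ x ∈ X, restrictF F x = w}

/-- Strong irreducibility of a shift. -/
def StronglyIrreducible [Group G] (X : Set (G → A)) : Prop :=
  ∃ K : Finset G, ∀ (Fu Fv : Finset G) (u : Fu → A) (v : Fv → A),
    Disjoint (Fu : Set G) ((K : Set G) * (Fv : Set G)) →
    u ∈ language X Fu → v ∈ language X Fv →
    ∃ x ∈ X, restrictF Fu x = u ∧ restrictF Fv x = v

/-- The free `G`-extension of an `H`-shift `Y`: all configurations whose
restriction to every right coset of `H` (pulled back to `H`) lies in `Y`. -/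
def freeExt [Group G] (H : Subgroup G) (Y : Set (H → A)) : Set (G → A) :=
  {x : G → A | ∀ g : G, (fun h : H => x ((h : G) * g)) ∈ Y}

/-- Local finiteness of a group: every finitely generated subgroup is finite. -/
def IsLocallyFinite (G : Type*) [Group G] : Prop :=
  ∀ S : Finset G, Finite ↥(Subgroup.closure (S : Set G))

/-- A (left) Følner sequence for a countable group. -/
def IsFolner [Group G] (F : ℕ → Finset G) : Prop :=
  (∀ n, (F n).Nonempty) ∧ (∀ g : G, ∃ n, g ∈ F n) ∧
  ∀ g : G, Filter.Tendsto
    (fun n => (Set.ncard ((((fun h => g * h) '' (F n : Set G))) ∆ ((F n : Set G))) : ℝ) /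
      ((F n).card : ℝ))
    Filter.atTop (nhds 0)

/-- Cardinality of the `F`-language. -/
noncomputable def langCard (X : Set (G → A)) (F : Finset G) : ℕ :=
  (language X F).ncard

/-- A shift-commuting self-homeomorphism of `X` (an automorphism of the shift `X`). -/
def IsAutomorphism [Group G] [TopologicalSpace A] (X : Set (G → A)) (φ : Equiv.Perm X) : Prop :=
  Continuous φ ∧ Continuous φ.symm ∧
  ∀ (g : G) (x y : X), (y : G → A) = shift g (x : G → A) →
    (φ y : G → A) = shift g ((φ x : G → A))

def sft [Group G] (F : Finset G) (P : Set (F → A)) : Set (G → A) :=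
  {x | ∀ g : G, restrictF F (shift g x) ∉ P}

section SubgroupShape

variable [Group G] (H : Subgroup G) (F : Finset G) [DecidablePred (· ∈ H)]

def shapeToSubgroup (hF : (F : Set G) ⊆ H) : F → F.subtype (· ∈ H) :=
  fun f => ⟨⟨f, hF f.2⟩, Finset.mem_subtype.2 f.2⟩

lemma restrictF_shift_comp_shapeToSubgroup (hF : (F : Set G) ⊆ H) (x : G → A) (g : G)
    (h : H) :
    restrictF (F.subtype (· ∈ H)) (shift h fun k : H => x (k * g)) ∘ shapeToSubgroup H F hF =
      restrictF F (shift (h * g) x) := by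
  funext f
  simp [restrictF, shift, shapeToSubgroup, mul_assoc]

/-- Every window `F * g` of a configuration lies in the coset `H * g`, so forbidding `P` on `G`
is the same as forbidding it on each coset of `H`. -/
theorem sft_eq_freeExt (hF : (F : Set G) ⊆ H) (P : Set (F → A)) :
    sft F P = freeExt H (sft (F.subtype (· ∈ H)) ((· ∘ shapeToSubgroup H F hF) ⁻¹' P)) := by
  ext x
  simp only [sft, freeExt, Set.mem_ofPred_eq, Set.mem_preimage,
    restrictF_shift_comp_shapeToSubgroup]
  constructor
  · exact fun hx g h => hx (h * g)
  · intro hx g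
    simpa only [OneMemClass.coe_one, one_mul] using hx g 1

end SubgroupShape

theorem every_SFT_is_freeExt_of_fg_SFT_general [Group G]
    (X : Set (G → A)) (hX : IsSFT X) :
    ∃ (F : Finset G) (Y : Set ((Subgroup.closure (F : Set G)) → A)),
      IsSFT Y ∧ X = freeExt (Subgroup.closure (F : Set G)) Y := by
  classical
  obtain ⟨F, P, rfl⟩ := hX
  exact ⟨F, _, ⟨_, _, rfl⟩, sft_eq_freeExt _ F Subgroup.subset_closure P⟩

/-- Every `G`-SFT is the free extension of an SFT on a finitely generated
subgroup of `G`. -/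
theorem every_SFT_is_freeExt_of_fg_SFT [Group G] [Fintype A] [Nonempty A]
    (X : Set (G → A)) (hX : IsSFT X) :
    ∃ (F : Finset G) (Y : Set ((Subgroup.closure (F : Set G)) → A)),
      IsSFT Y ∧ X = freeExt (Subgroup.closure (F : Set G)) Y :=
  every_SFT_is_freeExt_of_fg_SFT_general X hX

end LFPaper
end

section
/- Let G be a locally finite group, A a finite alphabet, and X ⊆ A^G a G-SFT. Then there exist a finite subgroup H ≤ G and an H-SFT Y ⊆ A^H such that X equals the free G-extension Y^↑G of Y. -/
open scoped Pointwise symmDiff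

namespace LFPaper

variable {G A B : Type*}

/-- Over a locally finite group, every `G`-SFT is the free extension of an SFT
on a finite subgroup of `G`. -/
theorem SFT_is_freeExt_of_finite_subgroup_SFT [Group G] (hLF : IsLocallyFinite G)
    [Fintype A] [Nonempty A] (X : Set (G → A)) (hX : IsSFT X) :
    ∃ (H : Subgroup G), Finite ↥H ∧
      ∃ Y : Set (H → A), IsSFT Y ∧ X = freeExt H Y := by
  classical
  obtain ⟨F, P, hXP⟩ := hX
  set H := Subgroup.closure (F : Set G) with hH
  refine ⟨H, hLF F, ?_⟩
  have hmem : ∀ f : G, f ∈ F → f ∈ H := fun f hf => Subgroup.subset_closure hf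
  set F' : Finset H := F.preimage ((↑) : H → G) Subtype.val_injective.injOn with hF'
  set e : {f : G // f ∈ F} → {f : H // f ∈ F'} := fun f =>
    ⟨⟨f.1, hmem f.1 f.2⟩, by simp [hF', Finset.mem_preimage, f.2]⟩ with he
  set P' : Set ({f : H // f ∈ F'} → A) := {w | (fun f : {f : G // f ∈ F} => w (e f)) ∈ P}
    with hP'
  refine ⟨{y : H → A | ∀ h : H, restrictF F' (shift h y) ∉ P'}, ⟨F', P', rfl⟩, ?_⟩
  subst hXP
  ext x
  simp only [freeExt, Set.mem_setOf_eq]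
  constructor
  · intro hx g h hmem'
    have : (fun f : {f : G // f ∈ F} => x (f.1 * (h.1 * g))) ∈ P := by
      have := hmem'
      simp only [hP', Set.mem_setOf_eq, restrictF, shift] at this
      convert this using 1
      funext f
      simp [he, mul_assoc]
    exact hx (h.1 * g) this
  · intro hx g hmem'
    have := hx g 1
    apply this
    simp only [hP', Set.mem_setOf_eq, restrictF, shift]
    convert hmem' using 1
    funext f
    simp [he, restrictF, shift]

end LFPaper
end

section
/- Let G be a group, H ≤ G a subgroup, A a finite alphabet, E a finite subset of H, and 𝔽 ⊆ (E → A) a set of patterns. Then X^G[𝔽] = (X^H[𝔽])^↑G; that is, the set {x ∈ A^G : ∀ g ∈ G, (σ^g x)|_E ∉ 𝔽} (viewing E as a subset of G) equals the free G-extension of the H-shift {y ∈ A^H : ∀ h ∈ H, (σ^h y)|_E ∉ 𝔽}. -/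
open scoped Pointwise symmDiff

namespace LFPaper

variable {G A B : Type*}

/-- For forbidden patterns whose shape lies in a subgroup `H ≤ G`, the `G`-shift
they define is the free extension of the `H`-shift they define. -/
theorem forbidden_patterns_freeExt [Group G] [Fintype A] [Nonempty A]
    (H : Subgroup G) (E : Finset H) (P : Set (E → A)) :
    {x : G → A | ∀ g : G, (fun e : E => x (((e : H) : G) * g)) ∉ P}
      = freeExt H {y : H → A | ∀ h : H, restrictF E (shift h y) ∉ P} := by
  ext x
  constructor
  · intro hx g h
    have key := hx ((h : G) * g)
    have heq : restrictF E (shift h fun k : H => x ((k : G) * g))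
        = fun e : E => x (((e : H) : G) * ((h : G) * g)) := by
      funext e; simp [restrictF, shift, mul_assoc]
    show restrictF E (shift h fun k : H => x ((k : G) * g)) ∉ P
    rw [heq]; exact key
  · intro hx g
    have key := hx g (1 : H)
    have heq : restrictF E (shift (1 : H) fun k : H => x ((k : G) * g))
        = fun e : E => x (((e : H) : G) * g) := by
      funext e; simp [restrictF, shift]
    rw [heq] at key; exact key

end LFPaper
end

section
/- Let G be a group, H ≤ G a subgroup, A a finite alphabet, and Y ⊆ A^H an H-shift. Then Y is an H-SFT if and only if the free G-extension Y^↑G is a G-SFT. -/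
open scoped Pointwise symmDiff

namespace LFPaper

variable {G A B : Type*}

lemma shift_shift [Group G] (g g' : G) (x : G → A) :
    shift g (shift g' x) = shift (g * g') x := by
  funext h; simp [shift, mul_assoc]

lemma shift_one [Group G] (x : G → A) : shift (1 : G) x = x := by
  funext h; simp [shift]

lemma isSFT_iff_lang [Group G] (X : Set (G → A)) :
    IsSFT X ↔ ∃ F : Finset G,
      X = {x : G → A | ∀ g : G, restrictF F (shift g x) ∈ language X F} := by
  constructor
  · rintro ⟨F, P, hX⟩
    refine ⟨F, Set.Subset.antisymm ?_ ?_⟩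
    · intro x hx g
      refine ⟨shift g x, ?_, rfl⟩
      rw [hX] at hx ⊢
      intro g'
      rw [shift_shift]
      exact hx _
    · intro x hx
      rw [hX]
      intro g
      obtain ⟨z, hz, hzf⟩ := hx g
      rw [hX] at hz
      have h1 := hz 1
      rw [shift_one] at h1
      rw [hzf] at h1
      exact h1
  · rintro ⟨F, hF⟩
    refine ⟨F, (language X F)ᶜ, ?_⟩
    ext x
    conv_lhs => rw [hF]
    simp [Set.mem_setOf_eq]

lemma freeExt_shift [Group G] (H : Subgroup G) (Y : Set (H → A)) (g : G) {x : G → A}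
    (hx : x ∈ freeExt H Y) : shift g x ∈ freeExt H Y := by
  intro g'
  simpa [shift, mul_assoc] using hx (g' * g)

lemma freeExt_mem_one [Group G] (H : Subgroup G) (Y : Set (H → A)) {x : G → A}
    (hx : x ∈ freeExt H Y) : (fun h : H => x (h : G)) ∈ Y := by
  have := hx 1
  simpa using this

/-- An `H`-shift `Y` is an SFT iff its free `G`-extension is an SFT. -/
theorem freeExt_SFT_iff [Group G] [Fintype A] [Nonempty A]
    [TopologicalSpace A] [DiscreteTopology A]
    (H : Subgroup G) (Y : Set (H → A)) (hY : IsShiftSpace Y) :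
    IsSFT Y ↔ IsSFT (freeExt H Y) := by
  classical
  constructor
  · rintro ⟨F, P, hYdef⟩
    refine ⟨F.image ((↑·) : H → G),
      {w | (fun f : F => w ⟨((f : H) : G), Finset.mem_image_of_mem _ f.2⟩) ∈ P}, ?_⟩
    ext x
    simp only [freeExt, Set.mem_setOf_eq]
    constructor
    · intro hx g hmem
      have hg := hx g
      rw [hYdef] at hg
      have h1 := hg 1
      rw [shift_one] at h1
      exact h1 hmem
    · intro hx g
      rw [hYdef]
      intro h
      have heq : restrictF F (shift h (fun k : H => x ((k : G) * g)))
          = fun f : F => x ((((f : H) : G)) * (((h : G)) * g)) := by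
        funext f
        simp [restrictF, shift, mul_assoc]
      intro hmem
      rw [heq] at hmem
      exact hx ((h : G) * g) hmem
  · intro hX
    obtain ⟨F, hF⟩ := (isSFT_iff_lang _).mp hX
    rw [isSFT_iff_lang]
    set E : Finset H := (F * F⁻¹).preimage ((↑·) : H → G) Subtype.coe_injective.injOn with hE
    refine ⟨E, Set.Subset.antisymm ?_ ?_⟩
    · intro y hy h
      exact ⟨shift h y, hY.2 h y hy, rfl⟩
    · intro y hy
      obtain ⟨z₀, hz₀, -⟩ := hy 1
      -- representative of right cosets
      set ρ : G → G := fun g => (Quotient.mk (QuotientGroup.rightRel H) g).out with hρ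
      have hρmem : ∀ g : G, g * (ρ g)⁻¹ ∈ H := by
        intro g
        have h1 : Quotient.mk (QuotientGroup.rightRel H) (ρ g)
            = Quotient.mk (QuotientGroup.rightRel H) g := Quotient.out_eq _
        exact QuotientGroup.rightRel_apply.mp (Quotient.exact h1)
      set δ : G → H := fun g => ⟨g * (ρ g)⁻¹, hρmem g⟩ with hδ
      have hρH : ∀ (h : H) (g : G), ρ ((h : G) * g) = ρ g := by
        intro h g
        have : Quotient.mk (QuotientGroup.rightRel H) ((h : G) * g)
            = Quotient.mk (QuotientGroup.rightRel H) g := by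
          apply Quotient.sound
          exact QuotientGroup.rightRel_apply.mpr (by simp : g * ((h : G) * g)⁻¹ ∈ H)
        exact congrArg Quotient.out this
      have hδH : ∀ (h : H) (g : G), δ ((h : G) * g) = h * δ g := by
        intro h g
        apply Subtype.ext
        simp only [hδ, Subgroup.coe_mul, hρH h g]
        group
      -- the candidate configuration
      set x : G → A := fun g => if hg : g ∈ H then y ⟨g, hg⟩ else z₀ (δ g) with hx
      have hnotH : ∀ (h : H) {g : G}, g ∉ (H : Set G) → ((h : G) * g) ∉ H := by
        intro h g hg hmem
        exact hg (by simpa using mul_mem (inv_mem h.2) hmem)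
      -- x satisfies the SFT condition for freeExt H Y
      have hxmem : x ∈ freeExt H Y := by
        rw [hF]
        intro g
        by_cases hcase : ∃ f ∈ F, f * g ∈ H
        · obtain ⟨f₀, hf₀F, hf₀⟩ := hcase
          set h₀ : H := ⟨f₀ * g, hf₀⟩ with hh₀
          obtain ⟨z, hzY, hzE⟩ := hy h₀
          set x' : G → A := fun g' => if hg' : g' ∈ H then z (⟨g', hg'⟩ * h₀⁻¹) else z₀ (δ g')
            with hx'
          have hx'mem : x' ∈ freeExt H Y := by
            intro g'
            by_cases hg' : g' ∈ H
            · have : (fun h : H => x' ((h : G) * g')) = shift (⟨g', hg'⟩ * h₀⁻¹) z := by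
                funext h
                have hm : (h : G) * g' ∈ H := mul_mem h.2 hg'
                simp only [hx', dif_pos hm, shift]
                congr 1
                apply Subtype.ext
                simp [mul_assoc]
              rw [this]
              exact hY.2 _ _ hzY
            · have : (fun h : H => x' ((h : G) * g')) = shift (δ g') z₀ := by
                funext h
                simp only [hx', dif_neg (hnotH h hg'), shift, hδH h g']
              rw [this]
              exact hY.2 _ _ hz₀
          refine ⟨shift g x', freeExt_shift H Y g hx'mem, ?_⟩
          funext f
          show x' ((f : G) * g) = x ((f : G) * g)
          by_cases hf : (f : G) * g ∈ H
          · have he : (⟨(f : G) * g, hf⟩ * h₀⁻¹ : H) ∈ E := by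
              rw [hE, Finset.mem_preimage]
              have : ((⟨(f : G) * g, hf⟩ * h₀⁻¹ : H) : G) = (f : G) * (f₀)⁻¹ := by
                simp only [Subgroup.coe_mul, Subgroup.coe_inv, hh₀]
                group
              rw [this]
              exact Finset.mul_mem_mul f.2 (Finset.inv_mem_inv hf₀F)
            have hz1 : z (⟨(f : G) * g, hf⟩ * h₀⁻¹) = y ((⟨(f : G) * g, hf⟩ * h₀⁻¹) * h₀) := by
              have := congrFun hzE ⟨_, he⟩
              simpa [restrictF, shift] using this
            simp only [hx', hx, dif_pos hf, hz1]
            congr 1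
            rw [inv_mul_cancel_right]
          · simp only [hx', hx, dif_neg hf]
        · push_neg at hcase
          set x'' : G → A := fun g' => z₀ (δ g') with hx''
          have hx''mem : x'' ∈ freeExt H Y := by
            intro g'
            have : (fun h : H => x'' ((h : G) * g')) = shift (δ g') z₀ := by
              funext h
              simp only [hx'', shift, hδH h g']
            rw [this]
            exact hY.2 _ _ hz₀
          refine ⟨shift g x'', freeExt_shift H Y g hx''mem, ?_⟩
          funext f
          show x'' ((f : G) * g) = x ((f : G) * g)
          simp only [hx, hx'', dif_neg (hcase f f.2)]
      -- conclude y ∈ Y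
      have := freeExt_mem_one H Y hxmem
      have hxy : (fun h : H => x (h : G)) = y := by
        funext h
        simp only [hx, dif_pos h.2]
      rwa [hxy] at this

end LFPaper
end

section
/- Let G be a group, H ≤ G a subgroup, A a finite alphabet, and Y ⊆ A^H an H-shift. Then Y is strongly irreducible if and only if the free G-extension Y^↑G is strongly irreducible. -/
open scoped Pointwise symmDiff

namespace LFPaper

variable {G A B : Type*}

section Aux

variable [Group G] (H : Subgroup G)

lemma relOut (a : G) : a * ((Quotient.mk (QuotientGroup.rightRel H) a).out)⁻¹ ∈ H :=
  (QuotientGroup.rightRel_apply).mp (@Quotient.mk_out _ (QuotientGroup.rightRel H) a)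

lemma mkR_mul (h : H) (g : G) :
    Quotient.mk (QuotientGroup.rightRel H) ((h:G)*g) = Quotient.mk _ g :=
  Quotient.sound ((QuotientGroup.rightRel_apply).mpr (by simp))

noncomputable def glue (c : Quotient (QuotientGroup.rightRel H) → (H → A)) : G → A :=
  fun a => c (Quotient.mk _ a)
    ⟨a * ((Quotient.mk (QuotientGroup.rightRel H) a).out)⁻¹, relOut H a⟩

lemma glue_mem (Y : Set (H → A)) (hinv : ∀ t : H, ∀ y ∈ Y, shift t y ∈ Y)
    (c : Quotient (QuotientGroup.rightRel H) → (H → A)) (hc : ∀ q, c q ∈ Y) :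
    glue H c ∈ freeExt H Y := by
  intro g
  have he : (fun h : H => glue H c ((h:G) * g))
      = shift (⟨g * ((Quotient.mk (QuotientGroup.rightRel H) g).out)⁻¹, relOut H g⟩ : H)
          (c (Quotient.mk _ g)) := by
    funext h
    simp only [glue, shift, mkR_mul]
    congr 1
    exact Subtype.ext (by simp [mul_assoc])
  rw [he]
  exact hinv _ _ (hc _)

lemma glue_exists (Y : Set (H → A)) (hinv : ∀ t : H, ∀ y ∈ Y, shift t y ∈ Y)
    (y : H → A) (hy : y ∈ Y) :
    ∃ x ∈ freeExt H Y, ∀ h : H, x (h:G) = y h := by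
  classical
  set c : Quotient (QuotientGroup.rightRel H) → (H → A) := fun q =>
    if h : q.out ∈ H then shift (⟨q.out, h⟩ : H) y else y with hc
  have hcY : ∀ q, c q ∈ Y := by
    intro q
    by_cases h : q.out ∈ H
    · simp only [hc, dif_pos h]; exact hinv _ _ hy
    · simp only [hc, dif_neg h]; exact hy
  refine ⟨glue H c, glue_mem H Y hinv c hcY, ?_⟩
  intro h
  have h1 : Quotient.mk (QuotientGroup.rightRel H) (h:G) = Quotient.mk _ (1:G) := by
    have := mkR_mul H h 1
    simpa using this
  have hout : (Quotient.mk (QuotientGroup.rightRel H) (h:G)).out ∈ H := by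
    rw [h1]
    have := relOut H (1:G)
    simpa using (inv_mem_iff.mp (by simpa using this))
  show c (Quotient.mk _ (h:G)) ⟨(h:G) * _, _⟩ = y h
  simp only [hc, dif_pos hout, shift]
  congr 1
  exact Subtype.ext (by simp)

end Aux

/-- An `H`-shift `Y` is strongly irreducible iff its free `G`-extension is
strongly irreducible. -/
theorem freeExt_stronglyIrreducible_iff [Group G] [Fintype A] [Nonempty A]
    [TopologicalSpace A] [DiscreteTopology A]
    (H : Subgroup G) (Y : Set (H → A)) (hY : IsShiftSpace Y) :
    StronglyIrreducible Y ↔ StronglyIrreducible (freeExt H Y) := by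
  classical
  have hinv : ∀ t : H, ∀ y ∈ Y, shift t y ∈ Y := hY.2
  constructor
  · rintro ⟨K, hK⟩
    refine ⟨K.image (Subtype.val), ?_⟩
    intro Fu Fv u v hdisj hu hv
    obtain ⟨xu, hxu, hxuu⟩ := hu
    obtain ⟨xv, hxv, hxvv⟩ := hv
    have inj : ∀ t : G, Function.Injective (fun h : H => (h:G) * t) := by
      intro t h1 h2 he
      exact Subtype.ext (mul_right_cancel he)
    set Q := Quotient (QuotientGroup.rightRel H)
    let FuH : Q → Finset H := fun q => Fu.preimage (fun h : H => (h:G) * q.out) ((inj _).injOn)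
    let FvH : Q → Finset H := fun q => Fv.preimage (fun h : H => (h:G) * q.out) ((inj _).injOn)
    have key : ∀ q : Q, ∃ y ∈ Y,
        restrictF (FuH q) y = restrictF (FuH q) (fun h : H => xu ((h:G) * q.out)) ∧
        restrictF (FvH q) y = restrictF (FvH q) (fun h : H => xv ((h:G) * q.out)) := by
      intro q
      refine hK (FuH q) (FvH q) _ _ ?_ ⟨_, hxu q.out, rfl⟩ ⟨_, hxv q.out, rfl⟩
      rw [Set.disjoint_left]
      intro h hmem1 hmem2
      rw [Finset.mem_coe, Finset.mem_preimage] at hmem1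
      obtain ⟨k, hk, b, hb, hkb⟩ := hmem2
      rw [Finset.mem_coe] at hk
      rw [Finset.mem_coe, Finset.mem_preimage] at hb
      have hkb' : k * b = h := hkb
      refine Set.disjoint_left.mp hdisj hmem1 ?_
      refine ⟨(k:G), ?_, (b:G) * q.out, hb, ?_⟩
      · rw [Finset.coe_image]; exact Set.mem_image_of_mem _ hk
      · show (k:G) * ((b:G) * q.out) = (h:G) * q.out
        rw [← mul_assoc, ← Subgroup.coe_mul, hkb']
    choose c hcY hcu hcv using key
    refine ⟨glue H c, glue_mem H Y hinv c hcY, ?_, ?_⟩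
    · funext a
      obtain ⟨a, ha⟩ := a
      have he : (⟨a * ((Quotient.mk (QuotientGroup.rightRel H) a).out)⁻¹, relOut H a⟩ : H)
          ∈ FuH (Quotient.mk _ a) := by
        rw [Finset.mem_preimage]
        simpa [inv_mul_cancel_right] using ha
      have h1 := congrFun (hcu (Quotient.mk _ a)) ⟨_, he⟩
      have h2 := congrFun hxuu ⟨a, ha⟩
      show glue H c a = u ⟨a, ha⟩
      rw [← h2]
      calc glue H c a = _ := rfl
        _ = xu (a * ((Quotient.mk (QuotientGroup.rightRel H) a).out)⁻¹ *
              (Quotient.mk (QuotientGroup.rightRel H) a).out) := h1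
        _ = restrictF Fu xu ⟨a, ha⟩ := by rw [inv_mul_cancel_right]; rfl
    · funext a
      obtain ⟨a, ha⟩ := a
      have he : (⟨a * ((Quotient.mk (QuotientGroup.rightRel H) a).out)⁻¹, relOut H a⟩ : H)
          ∈ FvH (Quotient.mk _ a) := by
        rw [Finset.mem_preimage]
        simpa [inv_mul_cancel_right] using ha
      have h1 := congrFun (hcv (Quotient.mk _ a)) ⟨_, he⟩
      have h2 := congrFun hxvv ⟨a, ha⟩
      show glue H c a = v ⟨a, ha⟩
      rw [← h2]
      calc glue H c a = _ := rfl
        _ = xv (a * ((Quotient.mk (QuotientGroup.rightRel H) a).out)⁻¹ *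
              (Quotient.mk (QuotientGroup.rightRel H) a).out) := h1
        _ = restrictF Fv xv ⟨a, ha⟩ := by rw [inv_mul_cancel_right]; rfl
  · rintro ⟨K, hK⟩
    refine ⟨K.preimage (Subtype.val) (Subtype.val_injective.injOn), ?_⟩
    intro Fu Fv u v hdisj hu hv
    obtain ⟨yu, hyu, huu⟩ := hu
    obtain ⟨yv, hyv, hvv⟩ := hv
    obtain ⟨xu, hxuX, hxu⟩ := glue_exists H Y hinv yu hyu
    obtain ⟨xv, hxvX, hxv⟩ := glue_exists H Y hinv yv hyv
    set Fu' : Finset G := Fu.image (Subtype.val) with hFu'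
    set Fv' : Finset G := Fv.image (Subtype.val) with hFv'
    have disj : Disjoint (Fu' : Set G) ((K : Set G) * (Fv' : Set G)) := by
      rw [Set.disjoint_left]
      intro a ha hmem
      rw [Finset.mem_coe, hFu', Finset.mem_image] at ha
      obtain ⟨h, hh, rfl⟩ := ha
      obtain ⟨k, hk, b, hb, hkb⟩ := hmem
      rw [Finset.mem_coe, hFv', Finset.mem_image] at hb
      obtain ⟨h', hh', rfl⟩ := hb
      have hkH : k ∈ H := by
        have : k = (h : G) * (h' : G)⁻¹ := by
          rw [← hkb]; group
        rw [this]
        exact mul_mem h.2 (inv_mem h'.2)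
      refine Set.disjoint_left.mp hdisj hh ?_
      refine ⟨⟨k, hkH⟩, by rw [Finset.mem_coe, Finset.mem_preimage]; exact hk, h', hh', ?_⟩
      exact Subtype.ext hkb
    obtain ⟨x, hxX, hxu', hxv'⟩ := hK Fu' Fv' (restrictF Fu' xu) (restrictF Fv' xv)
      disj ⟨xu, hxuX, rfl⟩ ⟨xv, hxvX, rfl⟩
    have hyY : (fun h : H => x (h:G)) ∈ Y := by
      have := hxX 1
      simpa using this
    refine ⟨fun h : H => x (h:G), hyY, ?_, ?_⟩
    · funext a
      obtain ⟨h, hh⟩ := a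
      have hmem : (h : G) ∈ Fu' := Finset.mem_image_of_mem _ hh
      have h1 := congrFun hxu' ⟨(h:G), hmem⟩
      have h2 := congrFun huu ⟨h, hh⟩
      show x (h:G) = u ⟨h, hh⟩
      rw [← h2]
      calc x (h:G) = restrictF Fu' x ⟨(h:G), hmem⟩ := rfl
        _ = xu (h:G) := h1
        _ = yu h := hxu h
        _ = restrictF Fu yu ⟨h, hh⟩ := rfl
    · funext a
      obtain ⟨h, hh⟩ := a
      have hmem : (h : G) ∈ Fv' := Finset.mem_image_of_mem _ hh
      have h1 := congrFun hxv' ⟨(h:G), hmem⟩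
      have h2 := congrFun hvv ⟨h, hh⟩
      show x (h:G) = v ⟨h, hh⟩
      rw [← h2]
      calc x (h:G) = restrictF Fv' x ⟨(h:G), hmem⟩ := rfl
        _ = xv (h:G) := h1
        _ = yv h := hxv h
        _ = restrictF Fv yv ⟨h, hh⟩ := rfl


end LFPaper
end

section
/- Let G be a group, H ≤ G a subgroup, A and B finite alphabets, X ⊆ A^H an H-shift, F a finite subset of H, and β : (F → A) → B a block map. Define the block codes φ^H_β : A^H → B^H by φ^H_β(y)(h) = β((σ^h y)|_F) and φ^G_β : A^G → B^G by φ^G_β(x)(g) = β((σ^g x)|_F) (viewing F as a subset of G). Then the image φ^G_β(X^↑G) of the free G-extension of X equals the free G-extension (φ^H_β(X))^↑G of the image of X. -/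
open scoped Pointwise symmDiff

namespace LFPaper

variable {G A B : Type*}

/-- A block code generated by a block map with shape inside a subgroup `H`
commutes with free extension: the image of the free extension is
the free extension of the image. -/
theorem freeExt_blockCode_image [Group G] [Fintype A] [Nonempty A] [Fintype B] [Nonempty B]
    [TopologicalSpace A] [DiscreteTopology A]
    (H : Subgroup G) (X : Set (H → A)) (hX : IsShiftSpace X)
    (F : Finset H) (beta : (F → A) → B) :
    (fun x : G → A => fun g : G => beta (fun f : F => x ((((f : H)) : G) * g))) '' (freeExt H X)
      = freeExt H ((fun y : H → A => fun h : H => beta (restrictF F (shift h y))) '' X) := by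
  ext z
  constructor
  · rintro ⟨x, hx, rfl⟩
    intro g
    refine ⟨fun h : H => x ((h : G) * g), hx g, ?_⟩
    funext h
    show beta (restrictF F (shift h fun h : H => x ((h : G) * g)))
        = beta (fun f : F => x (((f : H) : G) * ((h : G) * g)))
    congr 1
    funext f
    show x ((((f : H) * h : H) : G) * g) = x (((f : H) : G) * ((h : G) * g))
    push_cast
    rw [mul_assoc]
  · intro hz
    classical
    simp only [freeExt, Set.mem_setOf_eq, Set.mem_image] at hz
    choose y hyX hy using hz
    let t : G → G := fun g => (Quotient.mk'' g : Quotient (QuotientGroup.rightRel H)).out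
    have ht : ∀ g : G, g * (t g)⁻¹ ∈ H := by
      intro g
      have := Quotient.mk_out (s := QuotientGroup.rightRel H) g
      exact (QuotientGroup.rightRel_apply).mp this
    have hco : ∀ (h : H) (g : G), t ((h : G) * g) = t g := by
      intro h g
      have : (Quotient.mk'' ((h : G) * g) : Quotient (QuotientGroup.rightRel H))
          = Quotient.mk'' g := by
        apply Quotient.sound'
        rw [QuotientGroup.rightRel_apply]
        simpa using h.2
      simp only [t, this]
    let k : G → H := fun g => ⟨g * (t g)⁻¹, ht g⟩
    have hk : ∀ (h : H) (g : G), k ((h : G) * g) = h * k g := by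
      intro h g
      ext
      show ((h : G) * g) * (t ((h:G) * g))⁻¹ = (h : G) * (g * (t g)⁻¹)
      rw [hco, mul_assoc]
    let x : G → A := fun g => y (t g) (k g)
    have hxg : ∀ g : G, (fun h : H => x ((h : G) * g)) = shift (k g) (y (t g)) := by
      intro g
      funext h
      show y (t ((h:G) * g)) (k ((h:G)*g)) = y (t g) (h * k g)
      rw [hk, hco]
    refine ⟨x, ?_, ?_⟩
    · intro g
      rw [hxg g]
      exact hX.2 _ _ (hyX (t g))
    · funext g
      show beta (fun f : F => x ((f : H) * g : G)) = z g
      have h1 : (fun f : F => x (((f : H) : G) * g)) = restrictF F (shift (k g) (y (t g))) := by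
        funext f
        have := congrFun (hxg g) (f : H)
        exact this
      rw [h1]
      have h2 := congrFun (hy (t g)) (k g)
      rw [h2]
      show z (((g * (t g)⁻¹) : G) * t g) = z g
      rw [inv_mul_cancel_right]

end LFPaper
end

section
/- Let G be a group, A a finite alphabet, and X ⊆ A^G a strongly irreducible G-shift. Then there exist a finite subset F ⊆ G and a strongly irreducible shift Y on the subgroup H = ⟨F⟩ generated by F (i.e., a strongly irreducible H-shift Y ⊆ A^H) such that X equals the free G-extension Y^↑G of Y. -/
open scoped Pointwise symmDiff

namespace LFPaper

variable {G A B : Type*}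

/-- In a product of discrete spaces, a point approximated on every finite set
by elements of `X` lies in the closure of `X`. -/
lemma mem_closure_pi_discrete [TopologicalSpace A] [DiscreteTopology A]
    {X : Set (G → A)} {x : G → A}
    (h : ∀ E : Finset G, ∃ z ∈ X, ∀ g ∈ E, z g = x g) : x ∈ closure X := by
  rw [mem_closure_iff_nhds]
  intro U hU
  rw [nhds_pi, Filter.mem_pi] at hU
  obtain ⟨I, hI, t, ht, hsub⟩ := hU
  obtain ⟨z, hzX, hz⟩ := h hI.toFinset
  refine ⟨z, hsub ?_, hzX⟩
  intro i hi
  rw [hz i (hI.mem_toFinset.mpr hi)]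
  exact mem_of_mem_nhds (ht i)

/-- Every strongly irreducible `G`-shift is the free extension of a strongly
irreducible shift on a finitely generated subgroup of `G`. -/
theorem stronglyIrreducible_is_freeExt_of_fg [Group G] [Fintype A] [Nonempty A]
    [TopologicalSpace A] [DiscreteTopology A]
    (X : Set (G → A)) (hXshift : IsShiftSpace X) (hXsi : StronglyIrreducible X) :
    ∃ (F : Finset G) (Y : Set ((Subgroup.closure (F : Set G)) → A)),
      IsShiftSpace Y ∧ StronglyIrreducible Y ∧ X = freeExt (Subgroup.closure (F : Set G)) Y := by
  classical
  obtain ⟨K, hK⟩ := hXsi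
  set H := Subgroup.closure (K : Set G) with hHdef
  set r : (G → A) → (H → A) := fun x h => x ↑h with hrdef
  refine ⟨K, r '' X, ⟨?_, ?_⟩, ?_, ?_⟩
  · -- closedness of Y
    have hcont : Continuous r := continuous_pi fun h => continuous_apply _
    have hXc : IsCompact X := hXshift.1.isCompact
    exact (hXc.image hcont).isClosed
  · -- shift invariance of Y
    rintro h₀ y ⟨x, hx, rfl⟩
    refine ⟨shift (↑h₀) x, hXshift.2 _ x hx, ?_⟩
    funext k
    simp [hrdef, shift]
  · -- strong irreducibility of Y
    refine ⟨K.attach.image (fun k => (⟨k.1, Subgroup.subset_closure k.2⟩ : H)), ?_⟩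
    intro Fu Fv u v hdisj hu hv
    obtain ⟨yu, ⟨xu, hxu, rfl⟩, rfl⟩ := hu
    obtain ⟨yv, ⟨xv, hxv, rfl⟩, rfl⟩ := hv
    set Fu' : Finset G := Fu.image ((↑) : H → G) with hFu'
    set Fv' : Finset G := Fv.image ((↑) : H → G) with hFv'
    have hdisj' : Disjoint (Fu' : Set G) ((K : Set G) * (Fv' : Set G)) := by
      rw [Set.disjoint_left]
      rintro g hg1 hg2
      obtain ⟨k, hk, w, hw, rfl⟩ := hg2
      obtain ⟨h₁, hh₁, hh₁e⟩ := Finset.mem_image.mp (Finset.mem_coe.mp hg1)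
      obtain ⟨h₂, hh₂, hh₂e⟩ := Finset.mem_image.mp (Finset.mem_coe.mp hw)
      have hkH : k ∈ H := Subgroup.subset_closure hk
      have : h₁ ∈ ((K.attach.image
          (fun k => (⟨k.1, Subgroup.subset_closure k.2⟩ : H)) : Finset H) : Set H)
            * (Fv : Set H) := by
        refine ⟨⟨k, hkH⟩, ?_, h₂, hh₂, ?_⟩
        · simp only [Finset.coe_image, Set.mem_image, Finset.mem_coe]
          exact ⟨⟨k, hk⟩, Finset.mem_attach _ _, rfl⟩
        · apply Subtype.ext
          simp [hh₂e, hh₁e]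
      exact Set.disjoint_left.mp hdisj hh₁ this
    have humem : restrictF Fu' xu ∈ language X Fu' := ⟨xu, hxu, rfl⟩
    have hvmem : restrictF Fv' xv ∈ language X Fv' := ⟨xv, hxv, rfl⟩
    obtain ⟨z, hzX, hz1, hz2⟩ := hK Fu' Fv' _ _ hdisj' humem hvmem
    refine ⟨r z, ⟨z, hzX, rfl⟩, ?_, ?_⟩
    · funext h
      have hmem : (↑h : G) ∈ Fu' := Finset.mem_image_of_mem _ h.2
      exact congrFun hz1 ⟨↑h, hmem⟩
    · funext h
      have hmem : (↑h : G) ∈ Fv' := Finset.mem_image_of_mem _ h.2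
      exact congrFun hz2 ⟨↑h, hmem⟩
  · -- X = freeExt H Y
    apply Set.Subset.antisymm
    · intro x hx g
      exact ⟨shift g x, hXshift.2 g x hx, rfl⟩
    · intro x hx
      have key : ∀ E : Finset G, ∃ z ∈ X, ∀ g ∈ E, z g = x g := by
        intro E
        induction E using Finset.strongInduction with
        | _ E ih =>
          rcases E.eq_empty_or_nonempty with rfl | ⟨g₀, hg₀⟩
          · obtain ⟨x₀, hx₀X, -⟩ := hx 1
            exact ⟨x₀, hx₀X, fun g hg => absurd hg (Finset.notMem_empty g)⟩
          · set E₁ : Finset G := E.filter (fun g => g * g₀⁻¹ ∈ H) with hE₁def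
            set E₂ : Finset G := E \ E₁ with hE₂def
            have hg₀E₁ : g₀ ∈ E₁ := by
              simp only [hE₁def, Finset.mem_filter]
              exact ⟨hg₀, by simp [Subgroup.one_mem]⟩
            have hE₂ss : E₂ ⊂ E :=
              Finset.sdiff_ssubset (Finset.filter_subset _ _) ⟨g₀, hg₀E₁⟩
            obtain ⟨z₂, hz₂X, hz₂⟩ := ih E₂ hE₂ss
            obtain ⟨x₁, hx₁X, hx₁⟩ := hx g₀
            have hz₁X : shift g₀⁻¹ x₁ ∈ X := hXshift.2 g₀⁻¹ x₁ hx₁X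
            have hz₁ : ∀ g ∈ E₁, shift g₀⁻¹ x₁ g = x g := by
              intro g hg
              have hgH : g * g₀⁻¹ ∈ H := (Finset.mem_filter.mp hg).2
              have := congrFun hx₁ ⟨g * g₀⁻¹, hgH⟩
              simpa [shift, hrdef, inv_mul_cancel_right] using this
            have hdisj : Disjoint (E₂ : Set G) ((K : Set G) * (E₁ : Set G)) := by
              rw [Set.disjoint_left]
              rintro g hg2 ⟨k, hk, e, he, rfl⟩
              simp only [hE₂def, Finset.coe_sdiff, Set.mem_diff, Finset.mem_coe] at hg2
              apply hg2.2
              have heH : e * g₀⁻¹ ∈ H := (Finset.mem_filter.mp he).2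
              have : k * e * g₀⁻¹ ∈ H := by
                have := H.mul_mem (Subgroup.subset_closure hk) heH
                simpa [mul_assoc] using this
              exact Finset.mem_filter.mpr ⟨hg2.1, this⟩
            obtain ⟨z, hzX, h1, h2⟩ := hK E₂ E₁ (restrictF E₂ z₂) (restrictF E₁ (shift g₀⁻¹ x₁))
              hdisj ⟨z₂, hz₂X, rfl⟩ ⟨shift g₀⁻¹ x₁, hz₁X, rfl⟩
            refine ⟨z, hzX, ?_⟩
            intro g hg
            by_cases hgE₁ : g ∈ E₁
            · have := congrFun h2 ⟨g, hgE₁⟩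
              rw [show z g = shift g₀⁻¹ x₁ g from this]
              exact hz₁ g hgE₁
            · have hgE₂ : g ∈ E₂ := Finset.mem_sdiff.mpr ⟨hg, hgE₁⟩
              have := congrFun h1 ⟨g, hgE₂⟩
              rw [show z g = z₂ g from this]
              exact hz₂ g hgE₂
      have hcl := mem_closure_pi_discrete key
      rwa [hXshift.1.closure_eq] at hcl

end LFPaper
end

section
/- Let G be a locally finite group and A a finite alphabet. Then every G-SFT X ⊆ A^G is strongly irreducible. -/
open scoped Pointwise symmDiff

namespace LFPaper

variable {G A B : Type*}

/-- Over a locally finite group, every `G`-SFT is strongly irreducible. -/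
theorem SFT_stronglyIrreducible_of_locallyFinite [Group G] (hLF : IsLocallyFinite G)
    [Fintype A] [Nonempty A] (X : Set (G → A)) (hX : IsSFT X) :
    StronglyIrreducible X := by
  classical
  obtain ⟨F, P, hXP⟩ := hX
  have hfin : Finite ↥(Subgroup.closure (F : Set G)) := hLF F
  set H := Subgroup.closure (F : Set G) with hH
  have hsf : (H : Set G).Finite := Set.toFinite _
  refine ⟨hsf.toFinset, ?_⟩
  intro Fu Fv u v hdis hu hv
  obtain ⟨xu, hxu, hru⟩ := hu
  obtain ⟨xv, hxv, hrv⟩ := hv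
  set S : Set G := (H : Set G) * (Fv : Set G) with hS
  have hdis' : Disjoint (Fu : Set G) S := by
    rwa [hS, ← hsf.coe_toFinset]
  -- S is a union of right cosets of H
  have hcoset : ∀ g h : G, h ∈ H → (h * g ∈ S ↔ g ∈ S) := by
    intro g h hh
    constructor
    · rintro ⟨a, ha, b, hb, hab⟩
      exact ⟨h⁻¹ * a, mul_mem (inv_mem hh) ha, b, hb, by
        show h⁻¹ * a * b = g
        have hab' : a * b = h * g := hab
        rw [mul_assoc, hab']; group⟩
    · rintro ⟨a, ha, b, hb, hab⟩
      exact ⟨h * a, mul_mem hh ha, b, hb, by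
        show h * a * b = h * g
        have hab' : a * b = g := hab
        rw [mul_assoc, hab']⟩
  set x : G → A := fun g => if g ∈ S then xv g else xu g with hx
  have hmemF : ∀ f : G, f ∈ F → f ∈ H := fun f hf => Subgroup.subset_closure hf
  have hxX : x ∈ X := by
    rw [hXP]
    intro g
    by_cases hg : g ∈ S
    · have : restrictF F (shift g x) = restrictF F (shift g xv) := by
        funext f
        have hfS : (f : G) * g ∈ S := (hcoset g f (hmemF f f.2)).2 hg
        simp [restrictF, shift, hx, hfS]
      rw [this]
      rw [hXP] at hxv
      exact hxv g
    · have : restrictF F (shift g x) = restrictF F (shift g xu) := by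
        funext f
        have hfS : (f : G) * g ∉ S := fun h => hg ((hcoset g f (hmemF f f.2)).1 h)
        simp [restrictF, shift, hx, hfS]
      rw [this]
      rw [hXP] at hxu
      exact hxu g
  refine ⟨x, hxX, ?_, ?_⟩
  · funext a
    have haS : (a : G) ∉ S := fun h => hdis'.ne_of_mem a.2 h rfl
    rw [← hru]
    simp [restrictF, hx, haS]
  · funext a
    have haS : (a : G) ∈ S := ⟨1, one_mem H, a, a.2, one_mul _⟩
    rw [← hrv]
    simp [restrictF, hx, haS]

end LFPaper
end

section
/- Let G be a group that is not locally finite. Then there exists a G-SFT X ⊆ (Fin 2)^G which is not strongly irreducible. -/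
open scoped Pointwise symmDiff

namespace LFPaper

variable {G A B : Type*}

/-- Over a group that is not locally finite, there is a `G`-SFT which is not
strongly irreducible. -/
theorem exists_SFT_not_stronglyIrreducible [Group G] (hLF : ¬ IsLocallyFinite G) :
    ∃ X : Set (G → Fin 2), IsSFT X ∧ ¬ StronglyIrreducible X := by
  classical
  simp only [IsLocallyFinite, not_forall] at hLF
  obtain ⟨S, hS⟩ := hLF
  set H := Subgroup.closure (S : Set G) with hH
  have hHinf : (H : Set G).Infinite := by
    rw [Set.infinite_coe_iff.symm]
    rw [← not_finite_iff_infinite]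
    exact hS
  set X : Set (G → Fin 2) := {x | ∀ g : G, ∀ s ∈ S, x (s * g) = x g} with hX
  -- any x ∈ X is constant on right cosets of H
  have key : ∀ x ∈ X, ∀ t ∈ H, ∀ g : G, x (t * g) = x g := by
    intro x hx t ht
    have : t ∈ ({w : G | ∀ g : G, x (w * g) = x g} : Set G) := by
      refine Subgroup.closure_induction (fun s hs g => hx g s hs) ?_ ?_ ?_ ht
      · intro g; rw [one_mul]
      · intro a b _ _ ha hb g
        rw [mul_assoc, ha, hb]
      · intro a _ ha g
        have := ha (a⁻¹ * g)
        rwa [← mul_assoc, mul_inv_cancel, one_mul, eq_comm] at this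
    exact this
  refine ⟨X, ?_, ?_⟩
  · -- SFT
    refine ⟨insert (1 : G) S,
      {p : (insert (1 : G) S : Finset G) → Fin 2 |
        ∃ s, ∃ hs : s ∈ S, p ⟨s, Finset.mem_insert_of_mem hs⟩ ≠
          p ⟨1, Finset.mem_insert_self _ _⟩}, ?_⟩
    ext x
    simp only [hX, Set.mem_setOf_eq, restrictF, shift, not_exists]
    constructor
    · intro h g s hs hne
      exact hne (by simpa [one_mul] using h g s hs)
    · intro h g s hs
      by_contra hne
      exact h g s hs (by simpa [one_mul] using hne)
  · -- not strongly irreducible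
    rintro ⟨K, hK⟩
    -- pick t ∈ H with t⁻¹ ∉ K
    have hfin : (((K : Set G))⁻¹ : Set G).Finite := (K.finite_toSet).inv
    obtain ⟨t, htH, htK⟩ := ((hHinf.diff hfin)).nonempty
    have htH' : t ∈ H := htH
    have htK' : t⁻¹ ∉ (K : Set G) := by
      intro h; exact htK (Set.mem_inv.mpr (by simpa using h))
    set Fu : Finset G := {1}
    set Fv : Finset G := {t}
    have hdisj : Disjoint (Fu : Set G) ((K : Set G) * (Fv : Set G)) := by
      rw [Set.disjoint_left]
      intro a ha hb
      simp only [Fu, Finset.coe_singleton, Set.mem_singleton_iff] at ha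
      subst ha
      rw [Set.mem_mul] at hb
      obtain ⟨k, hk, b, hb', hkb⟩ := hb
      simp only [Fv, Finset.coe_singleton, Set.mem_singleton_iff] at hb'
      rw [hb'] at hkb
      apply htK'
      have hkt : k = t⁻¹ := eq_inv_of_mul_eq_one_left hkb
      rwa [← hkt]
    have h0 : (fun _ : G => (0 : Fin 2)) ∈ X := fun g s hs => rfl
    have h1 : (fun _ : G => (1 : Fin 2)) ∈ X := fun g s hs => rfl
    have hu : (fun _ : Fu => (0 : Fin 2)) ∈ language X Fu :=
      ⟨_, h0, rfl⟩
    have hv : (fun _ : Fv => (1 : Fin 2)) ∈ language X Fv :=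
      ⟨_, h1, rfl⟩
    obtain ⟨x, hxX, hxu, hxv⟩ := hK Fu Fv _ _ hdisj hu hv
    have e1 : x 1 = 0 := by
      have := congrFun hxu ⟨1, Finset.mem_singleton_self 1⟩
      simpa [restrictF] using this
    have e2 : x t = 1 := by
      have := congrFun hxv ⟨t, Finset.mem_singleton_self t⟩
      simpa [restrictF] using this
    have : x t = x 1 := by
      have := key x hxX t htH' 1
      simpa using this
    rw [e1, e2] at this
    exact absurd this (by decide)

end LFPaper
end

section
/- Let G be a locally finite group and A a finite alphabet. Then every strongly irreducible G-shift X ⊆ A^G is a G-SFT. -/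
open scoped Pointwise symmDiff

namespace LFPaper

variable {G A B : Type*}

/-- Over a locally finite group, every strongly irreducible `G`-shift is a `G`-SFT. -/
theorem stronglyIrreducible_isSFT_of_locallyFinite [Group G] (hLF : IsLocallyFinite G)
    [Fintype A] [Nonempty A] [TopologicalSpace A] [DiscreteTopology A]
    (X : Set (G → A)) (hXshift : IsShiftSpace X) (hXsi : StronglyIrreducible X) :
    IsSFT X := by
  classical
  obtain ⟨K, hK⟩ := hXsi
  haveI := hLF K
  set H := Subgroup.closure (K : Set G) with hHdef
  have hHfin : ((H : Set G)).Finite := Set.toFinite _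
  set FH : Finset G := hHfin.toFinset with hFHdef
  have hmemFH : ∀ a : G, a ∈ FH ↔ a ∈ H := by
    intro a; simp [hFHdef]
  have hKsub : ∀ k ∈ K, k ∈ H := fun k hk => Subgroup.subset_closure hk
  refine ⟨FH, (language X FH)ᶜ, ?_⟩
  ext x
  simp only [Set.mem_setOf_eq, Set.notMem_compl_iff]
  constructor
  · intro hx g
    exact ⟨shift g x, hXshift.2 g x hx, rfl⟩
  · intro hx
    -- the coset of t
    set C : G → Finset G := fun t => FH.image (· * t) with hCdef
    have hmemC : ∀ t a : G, a ∈ C t ↔ ∃ h ∈ H, h * t = a := by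
      intro t a
      simp only [hCdef, Finset.mem_image]
      constructor
      · rintro ⟨h, hh, rfl⟩; exact ⟨h, (hmemFH h).1 hh, rfl⟩
      · rintro ⟨h, hh, rfl⟩; exact ⟨h, (hmemFH h).2 hh, rfl⟩
    have hself : ∀ t : G, t ∈ C t := by
      intro t; exact (hmemC t t).2 ⟨1, H.one_mem, one_mul t⟩
    have hcos : ∀ t s a : G, a ∈ C t → a ∈ C s → ∀ b ∈ C t, b ∈ C s := by
      intro t s a hat has b hbt
      obtain ⟨h1, hh1, rfl⟩ := (hmemC t a).1 hat
      obtain ⟨h2, hh2, he⟩ := (hmemC s (h1 * t)).1 has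
      obtain ⟨h3, hh3, rfl⟩ := (hmemC t b).1 hbt
      refine (hmemC s (h3 * t)).2 ⟨h3 * h1⁻¹ * h2, ?_, ?_⟩
      · exact H.mul_mem (H.mul_mem hh3 (H.inv_mem hh1)) hh2
      · have : t = h1⁻¹ * (h2 * s) := by rw [he]; group
        rw [this]; group
    -- a pattern of x on each coset comes from X
    have hcosLang : ∀ t : G, ∃ z ∈ X, ∀ a ∈ C t, z a = x a := by
      intro t
      obtain ⟨z, hz, hzr⟩ := hx t
      refine ⟨shift t⁻¹ z, hXshift.2 t⁻¹ z hz, ?_⟩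
      intro a hat
      obtain ⟨h, hh, rfl⟩ := (hmemC t a).1 hat
      have hhF : h ∈ FH := (hmemFH h).2 hh
      have h1 := congrFun hzr ⟨h, hhF⟩
      simp only [restrictF, shift] at h1 ⊢
      rw [show h * t * t⁻¹ = h by group]
      exact h1
    -- main gluing claim
    have main : ∀ T : Finset G, ∃ y ∈ X, ∀ s ∈ T.biUnion C, y s = x s := by
      intro T
      induction T using Finset.induction_on with
      | empty =>
          obtain ⟨z, hz, _⟩ := hx 1
          exact ⟨z, hz, by simp⟩
      | @insert t T ht IH =>
          obtain ⟨y, hy, hyT⟩ := IH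
          by_cases hint : ∃ a, a ∈ C t ∧ a ∈ T.biUnion C
          · obtain ⟨a, hat, haU⟩ := hint
            obtain ⟨s, hsT, has⟩ := Finset.mem_biUnion.1 haU
            refine ⟨y, hy, ?_⟩
            intro b hb
            rcases Finset.mem_biUnion.1 hb with ⟨r, hrT, hbr⟩
            rcases Finset.mem_insert.1 hrT with rfl | hrT'
            · exact hyT b (Finset.mem_biUnion.2 ⟨s, hsT, hcos r s a hat has b hbr⟩)
            · exact hyT b (Finset.mem_biUnion.2 ⟨r, hrT', hbr⟩)
          · obtain ⟨z, hz, hzC⟩ := hcosLang t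
            have hdisj : Disjoint ((T.biUnion C : Finset G) : Set G)
                ((K : Set G) * ((C t : Finset G) : Set G)) := by
              rw [Set.disjoint_right]
              rintro a ⟨k, hk, b, hb, rfl⟩ haU
              refine hint ⟨k * b, ?_, haU⟩
              obtain ⟨h, hh, rfl⟩ := (hmemC t b).1 hb
              exact (hmemC t (k * (h * t))).2 ⟨k * h, H.mul_mem (hKsub k hk) hh, by group⟩
            have hu : restrictF (T.biUnion C) x ∈ language X (T.biUnion C) :=
              ⟨y, hy, funext fun a => hyT a a.2⟩
            have hv : restrictF (C t) x ∈ language X (C t) :=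
              ⟨z, hz, funext fun a => hzC a a.2⟩
            obtain ⟨w, hw, hwu, hwv⟩ := hK (T.biUnion C) (C t)
              (restrictF (T.biUnion C) x) (restrictF (C t) x) hdisj hu hv
            refine ⟨w, hw, ?_⟩
            intro b hb
            rcases Finset.mem_biUnion.1 hb with ⟨r, hrT, hbr⟩
            rcases Finset.mem_insert.1 hrT with rfl | hrT'
            · exact congrFun hwv ⟨b, hbr⟩
            · exact congrFun hwu ⟨b, Finset.mem_biUnion.2 ⟨r, hrT', hbr⟩⟩
    -- conclude x ∈ X by closedness
    have hclosure : x ∈ closure X := by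
      rw [mem_closure_iff]
      intro o ho hxo
      obtain ⟨I, u, hu, hsub⟩ := isOpen_pi_iff.1 ho x hxo
      obtain ⟨y, hy, hyI⟩ := main I
      refine ⟨y, hsub ?_, hy⟩
      intro i hi
      rw [hyI i (Finset.mem_biUnion.2 ⟨i, hi, hself i⟩)]
      exact (hu i hi).2
    rwa [hXshift.1.closure_eq] at hclosure

end LFPaper
end

section
/- Let G be a group that is not locally finite. Then there exists a strongly irreducible G-shift X ⊆ (Fin 2)^G which is not a G-SFT. -/
open scoped Pointwise symmDiff

namespace LFPaper

variable {G A B : Type*}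

/-!
Let `T ∋ 1` be a finite symmetric set generating an infinite subgroup. For every `z` of word
length `n + 2 ≥ 2`, forbid two zeros at `g` and `z * g` whose ball `T ^ (n + 3) * g` is otherwise
filled with ones. The frame of ones is connected by steps in `T ^ 2`, since both zeros can be
stepped over. Hence if two admissible configurations are glued along the hole-filled closures of
two shapes that are far apart (zeros elsewhere), a forbidden pattern in the result would have its
whole frame, and then also its two zeros, inside one closure: the result is admissible, which
gives strong irreducibility. Not of finite type: given a window `F`, pick `z ∉ F * F⁻¹`. The
indicator of a hole-filled large ball with zeros punched at `1` and `z` is not admissible, but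
each of its `F`-windows misses one of the two zeros and so is a window of an admissible
configuration with a single zero.
-/

theorem isOpen_setOf_apply_eq {A : Type*} [TopologicalSpace A] [DiscreteTopology A] (g : G)
    (a : A) : IsOpen {x : G → A | x g = a} :=
  (continuous_apply (A := fun _ => A) g).isOpen_preimage {a} (isOpen_discrete _)

section WordBalls

variable [Group G] [DecidableEq G] {T : Finset G}

theorem mem_pow_of_mem (h1 : (1 : G) ∈ T) {t : G} (ht : t ∈ T) {m : ℕ} (hm : m ≠ 0) :
    t ∈ T ^ m :=
  Finset.pow_subset_pow_right h1 (Nat.one_le_iff_ne_zero.2 hm) (by rwa [pow_one])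

theorem mul_mem_pow_add {a b : G} {m n : ℕ} (ha : a ∈ T ^ m) (hb : b ∈ T ^ n) :
    a * b ∈ T ^ (m + n) :=
  pow_add T m n ▸ Finset.mul_mem_mul ha hb

theorem inv_mem_pow (hT : T⁻¹ = T) {a : G} {n : ℕ} (ha : a ∈ T ^ n) : a⁻¹ ∈ T ^ n := by
  have h : (T ^ n)⁻¹ = T ^ n := by rw [← inv_pow, hT]
  exact h ▸ Finset.inv_mem_inv ha

theorem exists_mem_pow_of_mem_closure (hT : T⁻¹ = T) {S : Finset G} (hST : S ⊆ T) {a : G}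
    (ha : a ∈ Subgroup.closure (S : Set G)) : ∃ n, a ∈ T ^ n := by
  induction ha using Subgroup.closure_induction with
  | mem x hx => exact ⟨1, by simpa using hST hx⟩
  | one => exact ⟨0, by simp⟩
  | mul x y _ _ hx hy =>
    obtain ⟨m, hm⟩ := hx
    obtain ⟨n, hn⟩ := hy
    exact ⟨m + n, mul_mem_pow_add hm hn⟩
  | inv x _ hx =>
    obtain ⟨n, hn⟩ := hx
    exact ⟨n, inv_mem_pow hT hn⟩

theorem exists_pow_not_subset_of_infinite_closure (hT : T⁻¹ = T) {S : Finset G} (hST : S ⊆ T)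
    (hS : Infinite (Subgroup.closure (S : Set G))) (E : Finset G) : ∃ n, ¬ T ^ n ⊆ E := by
  by_contra! h
  have hsub : (Subgroup.closure (S : Set G) : Set G) ⊆ E := fun a ha => by
    obtain ⟨n, hn⟩ := exists_mem_pow_of_mem_closure hT hST ha
    exact h n hn
  exact not_finite_iff_infinite.2 hS (E.finite_toSet.subset hsub).to_subtype

theorem exists_mem_erase_one_mul_eq {m : ℕ} {z : G} (hz : z ∈ T ^ (m + 1)) (hz' : z ∉ T ^ m) :
    ∃ s ∈ T.erase 1, ∃ z' ∈ T ^ m, s * z' = z := by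
  obtain ⟨s, hs, z', hz'm, rfl⟩ := Finset.mem_mul.1 (pow_succ' T m ▸ hz)
  exact ⟨s, Finset.mem_erase.2 ⟨fun h => hz' (by simpa [h] using hz'm), hs⟩, z', hz'm, rfl⟩

theorem exists_mem_pow_add_two_notMem (h1 : (1 : G) ∈ T) (hunb : ∀ E : Finset G, ∃ n, ¬ T ^ n ⊆ E)
    (E : Finset G) : ∃ n z, z ∈ T ^ (n + 2) ∧ z ∉ T ^ (n + 1) ∧ z ∉ E := by
  by_contra! h
  obtain ⟨n, hn⟩ := hunb (T ∪ E)
  refine hn fun z hz => ?_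
  clear hn
  induction n generalizing z with
  | zero => simpa [Finset.mem_one.1 hz] using Or.inl h1
  | succ m ih =>
    by_cases hm : z ∈ T ^ m
    · exact ih z hm
    · cases m with
      | zero => simpa using Or.inl hz
      | succ k => exact Finset.mem_union_right _ (h k z hz hm)

end WordBalls

section FramedHoles

variable [Group G] [DecidableEq G] {T : Finset G} {n : ℕ} {z : G}

-- Radius `n + 3` because `z` will have length `n + 2` and the frame must contain its neighbours.
def frame (T : Finset G) (n : ℕ) (z : G) : Finset G := ((T ^ (n + 3)).erase 1).erase z

@[simp]
theorem mem_frame {w : G} : w ∈ frame T n z ↔ w ∈ T ^ (n + 3) ∧ w ≠ 1 ∧ w ≠ z := by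
  simp only [frame, Finset.mem_erase]
  tauto

def HasFramedHoles (T : Finset G) (n : ℕ) (z : G) (x : G → Fin 2) (g : G) : Prop :=
  x g = 0 ∧ x (z * g) = 0 ∧ ∀ w ∈ frame T n z, x (w * g) = 1

def noFramedHoles (T : Finset G) : Set (G → Fin 2) :=
  {x | ∀ n z g, z ∈ T ^ (n + 2) → z ∉ T ^ (n + 1) → ¬ HasFramedHoles T n z x g}

theorem hasFramedHoles_shift_iff {x : G → Fin 2} {g h : G} :
    HasFramedHoles T n z (shift h x) g ↔ HasFramedHoles T n z x (g * h) := by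
  simp only [HasFramedHoles, shift, mul_assoc]

theorem isOpen_setOf_hasFramedHoles (g : G) :
    IsOpen {x : G → Fin 2 | HasFramedHoles T n z x g} := by
  simp only [HasFramedHoles, Set.ofPred_and, Set.ofPred_forall]
  exact (isOpen_setOf_apply_eq _ _).inter ((isOpen_setOf_apply_eq _ _).inter
    (isOpen_biInter_finset fun w _ => isOpen_setOf_apply_eq _ _))

theorem isShiftSpace_noFramedHoles : IsShiftSpace (noFramedHoles T) := by
  refine ⟨?_, fun h x hx n z g hz hz' hpat => hx n z (g * h) hz hz' ?_⟩
  · simp only [noFramedHoles, Set.ofPred_forall]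
    repeat refine isClosed_iInter fun _ => ?_
    exact (isOpen_setOf_hasFramedHoles _).isClosed_compl
  · exact hasFramedHoles_shift_iff.1 hpat

end FramedHoles

section FillClosure

variable [Group G] [DecidableEq G] {T : Finset G}

def FillClosed (T : Finset G) (Ω : Set G) : Prop :=
  ∀ q, (∀ t ∈ T.erase 1, t * q ∈ Ω) → q ∈ Ω

def fillStep (T : Finset G) (E : Set G) : Set G →o Set G where
  toFun Ω := E ∪ Ω ∪ {q | ∀ t ∈ T.erase 1, t * q ∈ Ω}
  monotone' _ _ h := Set.union_subset_union (Set.union_subset_union_right _ h)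
    fun _ hq t ht => h (hq t ht)

def fillClosure (T : Finset G) (E : Set G) : Set G := (fillStep T E).lfp

theorem subset_fillClosure (E : Set G) : E ⊆ fillClosure T E := fun _ hq => by
  rw [fillClosure, ← OrderHom.map_lfp]
  exact Or.inl (Or.inl hq)

theorem fillClosed_fillClosure (E : Set G) : FillClosed T (fillClosure T E) := fun _ hq => by
  rw [fillClosure, ← OrderHom.map_lfp]
  exact Or.inr hq

theorem fillClosure_subset_mul (h1 : (1 : G) ∈ T) (hT : T⁻¹ = T) (hT1 : (T.erase 1).Nonempty)
    (E : Set G) : fillClosure T E ⊆ (T : Set G) * E := by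
  obtain ⟨t₀, ht₀⟩ := hT1
  have hE : E ⊆ (T : Set G) * E := fun q hq => ⟨1, h1, q, hq, one_mul q⟩
  -- Invariant: every `T`-neighbour of the set that falls outside it lies in `T * E`.
  suffices h : fillClosure T E ⊆ (T : Set G) * E ∧
      (T : Set G) * fillClosure T E ⊆ fillClosure T E ∪ (T : Set G) * E from h.1
  refine (fillStep T E).lfp_induction (p := fun Ω => Ω ⊆ (T : Set G) * E ∧
    (T : Set G) * Ω ⊆ Ω ∪ (T : Set G) * E) ?_ ?_
  · rintro Ω ⟨hΩ, hTΩ⟩ -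
    refine ⟨?_, ?_⟩
    · rintro q ((hq | hq) | hq)
      · exact hE hq
      · exact hΩ hq
      · have hinv : t₀⁻¹ ∈ (T : Set G) :=
          hT ▸ Finset.inv_mem_inv (Finset.mem_of_mem_erase ht₀)
        rcases hTΩ ⟨t₀⁻¹, hinv, t₀ * q, hq t₀ ht₀, inv_mul_cancel_left t₀ q⟩ with h | h
        exacts [hΩ h, h]
    · rintro _ ⟨t, ht, q, hq, rfl⟩
      rcases hq with (hq | hq) | hq
      · exact Or.inr ⟨t, ht, q, hq, rfl⟩
      · rcases hTΩ ⟨t, ht, q, hq, rfl⟩ with h | h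
        exacts [Or.inl (Or.inl (Or.inr h)), Or.inr h]
      · by_cases ht1 : t = 1
        · subst ht1
          refine Or.inl ?_
          show 1 * q ∈ E ∪ Ω ∪ {q | ∀ t ∈ T.erase 1, t * q ∈ Ω}
          rw [one_mul]
          exact Or.inr hq
        · exact Or.inl (Or.inl (Or.inr (hq t (Finset.mem_erase.2 ⟨ht1, ht⟩))))
  · intro s hs
    refine ⟨Set.sUnion_subset fun Ω hΩ => (hs Ω hΩ).1, ?_⟩
    rintro _ ⟨t, ht, q, ⟨Ω, hΩs, hq⟩, rfl⟩
    rcases (hs Ω hΩs).2 ⟨t, ht, q, hq, rfl⟩ with h | h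
    exacts [Or.inl ⟨Ω, hΩs, h⟩, Or.inr h]

end FillClosure



section Frames

variable [Group G] [DecidableEq G] {T : Finset G} {n : ℕ} {z : G}

theorem mem_of_frame_subset (h1 : (1 : G) ∈ T) (hT : T⁻¹ = T) (hz : z ∈ T ^ (n + 2))
    (hz' : z ∉ T ^ (n + 1)) {Ω : Set G} (hΩ : FillClosed T Ω) {g : G}
    (hframe : ∀ w ∈ frame T n z, w * g ∈ Ω) : g ∈ Ω ∧ z * g ∈ Ω := by
  have hzT : ∀ t ∈ T, t ≠ z := fun t ht h => hz' (h ▸ mem_pow_of_mem h1 ht n.succ_ne_zero)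
  refine ⟨hΩ g fun t ht => ?_, hΩ (z * g) fun t ht => ?_⟩
  · obtain ⟨ht1, ht⟩ := Finset.mem_erase.1 ht
    exact hframe t (mem_frame.2 ⟨mem_pow_of_mem h1 ht (by omega), ht1, hzT t ht⟩)
  · obtain ⟨ht1, ht⟩ := Finset.mem_erase.1 ht
    rw [← mul_assoc]
    refine hframe _ (mem_frame.2 ⟨?_, fun h => ?_, fun h => ht1 (mul_eq_right.1 h)⟩)
    · have := mul_mem_pow_add (m := 1) (by simpa using ht) hz
      rwa [show 1 + (n + 2) = n + 3 by omega] at this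
    · refine hzT t⁻¹ (hT ▸ Finset.inv_mem_inv ht) ?_
      exact (eq_inv_of_mul_eq_one_right h).symm

theorem HasFramedHoles.of_eqOn (h1 : (1 : G) ∈ T) (hT : T⁻¹ = T) (hz : z ∈ T ^ (n + 2))
    (hz' : z ∉ T ^ (n + 1)) {Ω : Set G} (hΩ : FillClosed T Ω) {g : G}
    (hframe : ∀ w ∈ frame T n z, w * g ∈ Ω) {x y : G → Fin 2} (hxy : Set.EqOn x y Ω)
    (hx : HasFramedHoles T n z x g) : HasFramedHoles T n z y g := by
  obtain ⟨hg, hzg⟩ := mem_of_frame_subset h1 hT hz hz' hΩ hframe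
  obtain ⟨hxg, hxzg, hxw⟩ := hx
  exact ⟨hxy hg ▸ hxg, hxy hzg ▸ hxzg, fun w hw => hxy (hframe w hw) ▸ hxw w hw⟩

theorem frame_subset_of_closed_under_adj (h1 : (1 : G) ∈ T) (hT : T⁻¹ = T)
    (hz : z ∈ T ^ (n + 2)) (hz' : z ∉ T ^ (n + 1)) {A : Set G} {t₀ : G} (ht₀ : t₀ ∈ T.erase 1)
    (ht₀A : t₀ ∈ A) (hA : ∀ a ∈ A, ∀ w ∈ frame T n z, a * w⁻¹ ∈ T ^ 2 → w ∈ A) :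
    ∀ w ∈ frame T n z, w ∈ A := by
  obtain ⟨s', hs', z', hz'T, rfl⟩ := exists_mem_erase_one_mul_eq hz hz'
  have hz'1 : z' ≠ 1 := by
    rintro rfl
    exact hz' (by simpa using mem_pow_of_mem h1 (Finset.mem_of_mem_erase hs') n.succ_ne_zero)
  have hz'z : z' ≠ s' * z' := fun h => hz' (h ▸ hz'T)
  have hinv : ∀ {s}, s ∈ T → s⁻¹ ∈ T := fun hs => hT ▸ Finset.inv_mem_inv hs
  suffices h : ∀ k ≤ n + 3, ∀ w ∈ T ^ k, w ≠ 1 → w ≠ s' * z' → w ∈ A from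
    fun w hw => h _ le_rfl w (mem_frame.1 hw).1 (mem_frame.1 hw).2.1 (mem_frame.1 hw).2.2
  intro k
  induction k using Nat.strong_induction_on with
  | _ k ih =>
  intro hk w hw hw1 hwz
  cases k with
  | zero => exact absurd (Finset.mem_one.1 hw) hw1
  | succ k =>
    obtain ⟨s, hs, w', hw', rfl⟩ := Finset.mem_mul.1 (pow_succ' T k ▸ hw)
    have hwf : s * w' ∈ frame T n (s' * z') :=
      mem_frame.2 ⟨Finset.pow_subset_pow_right h1 hk hw, hw1, hwz⟩
    -- Walk from `w` towards `1`, stepping over the removed points `1` and `z` with steps in `T ^ 2`.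
    by_cases hw'1 : w' = 1
    · subst hw'1
      refine hA t₀ ht₀A _ hwf ?_
      simpa [sq] using Finset.mul_mem_mul (Finset.mem_of_mem_erase ht₀) (hinv hs)
    by_cases hw'z : w' = s' * z'
    · subst hw'z
      have hnk : n + 1 < k + 1 := by
        by_contra! h
        exact hz' (Finset.pow_subset_pow_right h1 (by omega) hw')
      refine hA z' (ih (n + 1) hnk (by omega) z' hz'T hz'1 hz'z) _ hwf ?_
      simpa [sq, mul_assoc] using Finset.mul_mem_mul (hinv (Finset.mem_of_mem_erase hs')) (hinv hs)
    · refine hA w' (ih k (by omega) (by omega) w' hw' hw'1 hw'z) _ hwf ?_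
      simpa using mem_pow_of_mem h1 (hinv hs) two_ne_zero

theorem frame_subset_or_frame_subset (h1 : (1 : G) ∈ T) (hT : T⁻¹ = T)
    (hz : z ∈ T ^ (n + 2)) (hz' : z ∉ T ^ (n + 1)) {A B : Set G}
    (hsep : ∀ a ∈ A, ∀ b ∈ B, a * b⁻¹ ∉ T ^ 2) (hcover : ∀ w ∈ frame T n z, w ∈ A ∨ w ∈ B) :
    (∀ w ∈ frame T n z, w ∈ A) ∨ (∀ w ∈ frame T n z, w ∈ B) := by
  obtain ⟨s, hs, -, -, -⟩ := exists_mem_erase_one_mul_eq hz hz'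
  obtain ⟨hs1, hsT⟩ := Finset.mem_erase.1 hs
  have hsf : s ∈ frame T n z := mem_frame.2 ⟨mem_pow_of_mem h1 hsT (by omega), hs1,
    fun h => hz' (h ▸ mem_pow_of_mem h1 hsT n.succ_ne_zero)⟩
  rcases hcover s hsf with hsA | hsB
  · refine Or.inl (frame_subset_of_closed_under_adj h1 hT hz hz' hs hsA fun a ha w hw haw => ?_)
    exact (hcover w hw).resolve_right fun hwB => hsep a ha w hwB haw
  · refine Or.inr (frame_subset_of_closed_under_adj h1 hT hz hz' hs hsB fun b hb w hw hbw => ?_)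
    exact (hcover w hw).resolve_left fun hwA => hsep w hwA b hb (by simpa using inv_mem_pow hT hbw)

end Frames



section StrongIrreducibility

variable [Group G] [DecidableEq G] {T : Finset G}

theorem piecewise_mem_noFramedHoles (h1 : (1 : G) ∈ T) (hT : T⁻¹ = T) {xu xv : G → Fin 2}
    (hxu : xu ∈ noFramedHoles T) (hxv : xv ∈ noFramedHoles T) {Ωu Ωv : Set G}
    [DecidablePred (· ∈ Ωu)] [DecidablePred (· ∈ Ωv)] (hΩu : FillClosed T Ωu)
    (hΩv : FillClosed T Ωv) (hsep : ∀ a ∈ Ωu, ∀ b ∈ Ωv, a * b⁻¹ ∉ T ^ 2) :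
    Ωu.piecewise xu (Ωv.piecewise xv 0) ∈ noFramedHoles T := by
  intro n z g hz hz' hpat
  have hcover : ∀ w ∈ frame T n z, w * g ∈ Ωu ∨ w * g ∈ Ωv := by
    intro w hw
    by_contra! h
    have := hpat.2.2 w hw
    simp [Set.piecewise_eq_of_notMem, h.1, h.2] at this
  have hsep' : ∀ a ∈ {w | w * g ∈ Ωu}, ∀ b ∈ {w | w * g ∈ Ωv}, a * b⁻¹ ∉ T ^ 2 := by
    intro a ha b hb
    simpa [mul_inv_rev, ← mul_assoc] using hsep _ ha _ hb
  rcases frame_subset_or_frame_subset h1 hT hz hz' hsep' hcover with hA | hB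
  · refine hxu n z g hz hz' (hpat.of_eqOn h1 hT hz hz' hΩu hA fun q hq => ?_)
    exact Set.piecewise_eq_of_mem _ _ _ hq
  · refine hxv n z g hz hz' (hpat.of_eqOn h1 hT hz hz' hΩv hB fun q hq => ?_)
    have hqu : q ∉ Ωu := fun hqu => hsep q hqu q hq (by simpa using Finset.one_mem_pow h1)
    exact (Set.piecewise_eq_of_notMem _ _ _ hqu).trans (Set.piecewise_eq_of_mem _ _ _ hq)

theorem mul_inv_notMem_sq_of_disjoint (hT : T⁻¹ = T) {E F : Set G}
    (h : Disjoint E ((↑(T ^ 4) : Set G) * F)) {a b : G} (ha : a ∈ (T : Set G) * E)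
    (hb : b ∈ (T : Set G) * F) : a * b⁻¹ ∉ T ^ 2 := by
  obtain ⟨α, hα, e, he, rfl⟩ := ha
  obtain ⟨β, hβ, f, hf, rfl⟩ := hb
  intro hab
  have hα' : α⁻¹ ∈ T ^ 1 := by simpa using hT ▸ Finset.inv_mem_inv hα
  have hβ' : β ∈ T ^ 1 := by simpa using hβ
  refine Set.disjoint_left.1 h he ⟨α⁻¹ * (α * e * (β * f)⁻¹) * β, ?_, f, hf, by group⟩
  exact mul_mem_pow_add (mul_mem_pow_add hα' hab) hβ'

theorem stronglyIrreducible_noFramedHoles (h1 : (1 : G) ∈ T) (hT : T⁻¹ = T)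
    (hT1 : (T.erase 1).Nonempty) : StronglyIrreducible (noFramedHoles T) := by
  classical
  refine ⟨T ^ 4, fun Fu Fv u v hdisj ⟨xu, hxu, hu⟩ ⟨xv, hxv, hv⟩ => ?_⟩
  set Ωu := fillClosure T (Fu : Set G)
  set Ωv := fillClosure T (Fv : Set G)
  have hsep : ∀ a ∈ Ωu, ∀ b ∈ Ωv, a * b⁻¹ ∉ T ^ 2 := fun a ha b hb =>
    mul_inv_notMem_sq_of_disjoint hT hdisj (fillClosure_subset_mul h1 hT hT1 _ ha)
      (fillClosure_subset_mul h1 hT hT1 _ hb)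
  refine ⟨Ωu.piecewise xu (Ωv.piecewise xv 0), piecewise_mem_noFramedHoles h1 hT hxu hxv
    (fillClosed_fillClosure _) (fillClosed_fillClosure _) hsep, ?_, ?_⟩
  · rw [← hu]
    funext a
    exact Set.piecewise_eq_of_mem _ _ _ (subset_fillClosure _ a.2)
  · rw [← hv]
    funext a
    have hav : (a : G) ∈ Ωv := subset_fillClosure _ a.2
    have hau : (a : G) ∉ Ωu := fun hau => hsep a hau a hav (by simpa using Finset.one_mem_pow h1)
    exact (Set.piecewise_eq_of_notMem _ _ _ hau).trans (Set.piecewise_eq_of_mem _ _ _ hav)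

end StrongIrreducibility

theorem exists_forbidden_window [Group G] {X : Set (G → A)} {F : Finset G} {P : Set (F → A)}
    (hX : X = {x | ∀ g, restrictF F (shift g x) ∉ P}) {x : G → A} (hx : x ∉ X) :
    ∃ g, ∀ y ∈ X, ∃ f ∈ F, y (f * g) ≠ x (f * g) := by
  simp only [hX, Set.mem_ofPred_eq, not_forall, not_not] at hx
  obtain ⟨g, hg⟩ := hx
  refine ⟨g, fun y hy => ?_⟩
  by_contra! h
  rw [hX] at hy
  exact hy g (by convert hg using 1; funext f; exact h f f.2)

section NotFiniteType

variable [Group G] [DecidableEq G] {T : Finset G}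

theorem indicator_sdiff_singleton_mem_noFramedHoles (h1 : (1 : G) ∈ T) (hT : T⁻¹ = T)
    {Ω : Set G} (hΩ : FillClosed T Ω) (c : G) : (Ω \ {c}).indicator 1 ∈ noFramedHoles T := by
  rintro n z g hz hz' ⟨hg, hzg, hframe⟩
  have hone : ∀ q, (Ω \ {c}).indicator (1 : G → Fin 2) q = 0 → q ∈ Ω → q = c := fun q hq hqΩ =>
    by_contra fun hqc =>
      one_ne_zero ((Set.indicator_of_mem (Set.mem_sdiff_of_mem hqΩ hqc) _).symm.trans hq)
  obtain ⟨hgΩ, hzgΩ⟩ := mem_of_frame_subset h1 hT hz hz' hΩ fun w hw =>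
    (Set.mem_of_indicator_ne_zero (hframe w hw ▸ one_ne_zero)).1
  have hz1 : z = 1 := mul_eq_right.1 ((hone _ hzg hzgΩ).trans (hone _ hg hgΩ).symm)
  exact hz' (hz1 ▸ Finset.one_mem_pow h1)

theorem not_isSFT_noFramedHoles (h1 : (1 : G) ∈ T) (hT : T⁻¹ = T)
    (hunb : ∀ E : Finset G, ∃ n, ¬ T ^ n ⊆ E) : ¬ IsSFT (noFramedHoles T) := by
  classical
  rintro ⟨F, P, hX⟩
  obtain ⟨n, z, hz, hz', hzF⟩ := exists_mem_pow_add_two_notMem h1 hunb (F * F⁻¹)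
  set Ω := fillClosure T ((T ^ (n + 3) : Finset G) : Set G)
  set x : G → Fin 2 := (Ω \ {1, z}).indicator 1
  have hx : x ∉ noFramedHoles T := by
    refine fun hx => hx n z 1 hz hz' ⟨by simp [x], by simp [x], fun w hw => ?_⟩
    obtain ⟨hw3, hw1, hwz⟩ := mem_frame.1 hw
    have hwΩ : w ∈ Ω \ {1, z} := ⟨subset_fillClosure _ hw3, by simp [hw1, hwz]⟩
    simp [x, Set.indicator_of_mem hwΩ]
  obtain ⟨g, hg⟩ := exists_forbidden_window hX hx
  -- Since `z ∉ F * F⁻¹`, the window `F * g` misses one of the two zeros of `x`.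
  obtain ⟨c, hc⟩ : ∃ c, ∀ f ∈ F, (Ω \ {c}).indicator 1 (f * g) = x (f * g) := by
    by_cases h : ∃ f ∈ F, f * g = 1
    · obtain ⟨f₁, hf₁, hf₁g⟩ := h
      refine ⟨1, fun f hf => ?_⟩
      have hfz : f * g ≠ z := by
        rintro rfl
        rw [← inv_eq_of_mul_eq_one_right hf₁g] at hzF
        exact hzF (Finset.mul_mem_mul hf (Finset.inv_mem_inv hf₁))
      simp [x, Set.indicator_apply, hfz]
    · push Not at h
      exact ⟨z, fun f hf => by simp [x, Set.indicator_apply, h f hf]⟩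
  obtain ⟨f, hf, hne⟩ := hg _ (indicator_sdiff_singleton_mem_noFramedHoles h1 hT
    (fillClosed_fillClosure _) c)
  exact hne (hc f hf)

end NotFiniteType

/-- Over a group that is not locally finite, there exists a strongly irreducible
`G`-shift which is not a `G`-SFT. -/
theorem exists_stronglyIrreducible_not_SFT [Group G] (hLF : ¬ IsLocallyFinite G) :
    ∃ X : Set (G → Fin 2), IsShiftSpace X ∧ StronglyIrreducible X ∧ ¬ IsSFT X := by
  classical
  obtain ⟨S, hS⟩ : ∃ S : Finset G, Infinite (Subgroup.closure (S : Set G)) := by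
    simpa [IsLocallyFinite, not_finite_iff_infinite] using hLF
  set T : Finset G := insert 1 (S ∪ S⁻¹)
  have h1 : (1 : G) ∈ T := Finset.mem_insert_self _ _
  have hT : T⁻¹ = T := by
    ext a
    simp only [T, Finset.mem_inv', Finset.mem_insert, Finset.mem_union, inv_inv, inv_eq_one]
    tauto
  have hunb := exists_pow_not_subset_of_infinite_closure hT
    (Finset.subset_union_left.trans (Finset.subset_insert _ _)) hS
  have hT1 : (T.erase 1).Nonempty := by
    obtain ⟨n, hn⟩ := hunb {1}
    rw [Finset.nonempty_iff_ne_empty, Ne, Finset.erase_eq_empty_iff]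
    rintro (h | h)
    · simp [h] at h1
    · simp [h] at hn
  exact ⟨noFramedHoles T, isShiftSpace_noFramedHoles, stronglyIrreducible_noFramedHoles h1 hT hT1,
    not_isSFT_noFramedHoles h1 hT hunb⟩

end LFPaper
end

section
/- Let G be a locally finite group, A and B finite alphabets, X ⊆ A^G a G-SFT, Y ⊆ B^G a G-shift, and φ : X → Y a factor map (a continuous surjection satisfying φ(σ^g x) = σ^g(φ(x)) for all g ∈ G and x ∈ X). Then Y is a G-SFT. In particular, every sofic G-shift over a locally finite group is a G-SFT. -/
open scoped Pointwise symmDiff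

namespace LFPaper

variable {G A B : Type*}

lemma exists_window [TopologicalSpace A] [DiscreteTopology A]
    [TopologicalSpace B] [DiscreteTopology B]
    (X : Set (G → A)) (hXc : IsCompact X)
    (psi : (G → A) → B) (hcont : ContinuousOn psi X) :
    ∃ W : Finset G, ∀ x ∈ X, ∀ x' ∈ X, (∀ w ∈ W, x w = x' w) → psi x = psi x' := by
  classical
  have key : ∀ x : X, ∃ I : Finset G,
      ∀ z ∈ X, (∀ j ∈ I, z j = (x : G → A) j) → psi z = psi (x : G → A) := by
    rintro ⟨x, hx⟩
    have h1 : psi ⁻¹' {psi x} ∈ nhdsWithin x X :=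
      (hcont x hx) ((isOpen_discrete {psi x}).mem_nhds rfl)
    rw [mem_nhdsWithin] at h1
    obtain ⟨U, hU, hxU, hsub⟩ := h1
    obtain ⟨I, u, hu, hpi⟩ := isOpen_pi_iff.mp hU x hxU
    refine ⟨I, fun z hz hagree => ?_⟩
    have hzU : z ∈ U := hpi (by
      intro i hi
      exact (hagree i hi) ▸ (hu i (Finset.mem_coe.mp hi)).2)
    exact hsub ⟨hzU, hz⟩
  choose I hI using key
  set S : X → Set (G → A) := fun x => {z | ∀ j ∈ I x, z j = (x : G → A) j} with hS
  have hSopen : ∀ x : X, IsOpen (S x) := by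
    intro x
    have : S x = Set.pi (↑(I x) : Set G) (fun j => {(x : G → A) j}) := by
      ext z; simp [hS, Set.mem_pi]
    rw [this]
    exact isOpen_set_pi (Finset.finite_toSet _) (fun a _ => isOpen_discrete _)
  have hcover : X ⊆ ⋃ x : X, S x := fun z hz =>
    Set.mem_iUnion.mpr ⟨⟨z, hz⟩, fun j _ => rfl⟩
  obtain ⟨t, ht⟩ := hXc.elim_finite_subcover S hSopen hcover
  refine ⟨t.sup I, fun x hx x' hx' hagree => ?_⟩
  obtain ⟨i, hit, hxi⟩ := Set.mem_iUnion₂.mp (ht hx)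
  have hxi' : ∀ j ∈ I i, x j = (i : G → A) j := hxi
  have h1 := hI i x hx hxi'
  have h2 := hI i x' hx' (fun j hj => by
    rw [← hagree j (Finset.mem_of_subset (Finset.le_sup hit) hj)]
    exact hxi' j hj)
  rw [h1, h2]

/-- Over a locally finite group, any factor of a `G`-SFT is a `G`-SFT;
in particular every sofic `G`-shift is a `G`-SFT. -/
theorem factor_of_SFT_isSFT_of_locallyFinite [Group G] (hLF : IsLocallyFinite G)
    [Fintype A] [Nonempty A] [Fintype B] [Nonempty B]
    [TopologicalSpace A] [DiscreteTopology A] [TopologicalSpace B] [DiscreteTopology B]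
    (X : Set (G → A)) (Y : Set (G → B)) (hX : IsSFT X) (hY : IsShiftSpace Y)
    (phi : (G → A) → (G → B)) (hcont : ContinuousOn phi X) (hsurj : phi '' X = Y)
    (hequiv : ∀ g : G, ∀ x ∈ X, phi (shift g x) = shift g (phi x)) :
    IsSFT Y := by
  classical
  obtain ⟨F, P, hXeq⟩ := hX
  -- X is shift-invariant
  have hXinv : ∀ g : G, ∀ x ∈ X, shift g x ∈ X := by
    intro g x hx
    rw [hXeq] at hx ⊢
    intro g'
    rw [shift_shift]
    exact hx (g' * g)
  -- X is closed, hence compact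
  have hXclosed : IsClosed X := by
    rw [hXeq]
    have heq : {x : G → A | ∀ g : G, restrictF F (shift g x) ∉ P} =
        ⋂ g : G, (fun x => restrictF F (shift g x)) ⁻¹' Pᶜ := by
      ext x; simp [Set.mem_iInter]
    rw [heq]
    refine isClosed_iInter fun g => IsClosed.preimage ?_ (isClosed_discrete _)
    exact continuous_pi fun a => continuous_apply _
  have hXcomp : IsCompact X := hXclosed.isCompact
  -- window for the local rule of phi
  obtain ⟨W, hW⟩ := exists_window X hXcomp (fun x => phi x 1)
    ((continuous_apply (1 : G)).comp_continuousOn hcont)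
  -- the finite subgroup H generated by F ∪ W
  set H : Subgroup G := Subgroup.closure ((F ∪ W : Finset G) : Set G) with hH
  haveI : Finite ↥H := hLF (F ∪ W)
  have hfin : (H : Set G).Finite := Set.toFinite _
  set Hs : Finset G := hfin.toFinset with hHsdef
  have hHsmem : ∀ a : G, a ∈ Hs ↔ a ∈ H := fun a => hfin.mem_toFinset
  have hFH : ∀ f : G, f ∈ F → f ∈ H := fun f hf =>
    Subgroup.subset_closure (by simpa using Finset.mem_union_left W hf)
  have hWH : ∀ w : G, w ∈ W → w ∈ H := fun w hw =>
    Subgroup.subset_closure (by simpa using Finset.mem_union_right F hw)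
  -- coset representatives for right cosets of H
  set r : G → G := fun g => (Quotient.mk (QuotientGroup.rightRel H) g).out with hr
  have hrel : ∀ g : G, g * (r g)⁻¹ ∈ H := by
    intro g
    have := Quotient.mk_out (s := QuotientGroup.rightRel H) g
    exact QuotientGroup.rightRel_apply.mp this
  have hconst : ∀ (g h : G), h ∈ H → r (h * g) = r g := by
    intro g h hh
    have : (Quotient.mk (QuotientGroup.rightRel H) (h * g)) =
        (Quotient.mk (QuotientGroup.rightRel H) g) := by
      apply Quotient.sound
      refine QuotientGroup.rightRel_apply.mpr ?_
      have : g * (h * g)⁻¹ = h⁻¹ := by group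
      rw [this]
      exact inv_mem hh
    simp only [hr, this]
  -- the SFT presentation of Y
  refine ⟨Hs, (language Y Hs)ᶜ, ?_⟩
  ext y
  simp only [Set.mem_setOf_eq, Set.not_notMem, Set.mem_compl_iff, not_not]
  constructor
  · intro hy g
    exact ⟨shift g y, hY.2 g y hy, rfl⟩
  · intro hfa
    -- choose, for each g, a point of X whose image matches y on the coset H g
    have hc : ∀ g : G, ∃ x' : G → A, x' ∈ X ∧ ∀ h ∈ Hs, phi x' (h * g) = y (h * g) := by
      intro g
      obtain ⟨y', hy', hres⟩ := hfa g
      have : y' ∈ phi '' X := hsurj ▸ hy'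
      obtain ⟨x0, hx0, hphix0⟩ := this
      refine ⟨shift g⁻¹ x0, hXinv g⁻¹ x0 hx0, ?_⟩
      intro h hh
      have heq : phi (shift g⁻¹ x0) = shift g⁻¹ (phi x0) := hequiv g⁻¹ x0 hx0
      rw [heq]
      have e1 : shift g⁻¹ (phi x0) (h * g) = y' h := by
        simp [shift, hphix0]
      rw [e1]
      have := congrFun hres ⟨h, hh⟩
      simpa [restrictF, shift] using this
    choose c hcX hcy using hc
    set x : G → A := fun a => c (r a) a with hx
    have hxX : x ∈ X := by
      rw [hXeq]
      intro g
      have e : restrictF F (shift g x) = restrictF F (shift g (c (r g))) := by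
        funext f
        show x ((f : G) * g) = c (r g) ((f : G) * g)
        have : r ((f : G) * g) = r g := hconst g f (hFH f f.2)
        simp only [hx, this]
      rw [e]
      have := hcX (r g)
      rw [hXeq] at this
      exact this g
    have hphix : phi x = y := by
      funext g
      have hx1 : shift g x ∈ X := hXinv g x hxX
      have hx2 : shift g (c (r g)) ∈ X := hXinv g _ (hcX (r g))
      have hagree : ∀ w ∈ W, (shift g x) w = (shift g (c (r g))) w := by
        intro w hw
        show x (w * g) = c (r g) (w * g)
        have : r (w * g) = r g := hconst g w (hWH w hw)
        simp only [hx, this]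
      have h1 := hW _ hx1 _ hx2 hagree
      have e1 : phi (shift g x) 1 = phi x g := by
        rw [hequiv g x hxX]; simp [shift]
      have e2 : phi (shift g (c (r g))) 1 = phi (c (r g)) g := by
        rw [hequiv g _ (hcX (r g))]; simp [shift]
      rw [e1, e2] at h1
      rw [h1]
      have hgd : g = (g * (r g)⁻¹) * r g := by group
      have hmem : g * (r g)⁻¹ ∈ Hs := (hHsmem _).mpr (hrel g)
      calc phi (c (r g)) g = phi (c (r g)) ((g * (r g)⁻¹) * r g) := by rw [← hgd]
        _ = y ((g * (r g)⁻¹) * r g) := hcy (r g) _ hmem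
        _ = y g := by rw [← hgd]
    rw [← hsurj]
    exact ⟨x, hxX, hphix⟩

end LFPaper
end

section
/- Let G be a group with the property that for every finite alphabet A and every G-SFT X ⊆ A^G, the automorphism group Aut(X) is locally finite (every finite subset of Aut(X) generates a finite subgroup). Then G is locally finite. -/
open scoped Pointwise symmDiff

namespace LFPaper

variable {G A B : Type*}

/-- Left-translation automorphism of the full shift, as a permutation of `univ`. -/
def tauPerm [Group G] (g : G) : Equiv.Perm ↥(Set.univ : Set (G → Bool)) where
  toFun x := ⟨fun k => (x : G → Bool) (g⁻¹ * k), trivial⟩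
  invFun x := ⟨fun k => (x : G → Bool) (g * k), trivial⟩
  left_inv x := by ext k; simp
  right_inv x := by ext k; simp

/-- `tauPerm` as a monoid hom. -/
def tauHom [Group G] : G →* Equiv.Perm ↥(Set.univ : Set (G → Bool)) where
  toFun := tauPerm
  map_one' := by ext x k; simp [tauPerm]
  map_mul' g₁ g₂ :=
    Equiv.ext fun x => Subtype.ext (funext fun k => by
      show (x : G → Bool) ((g₁ * g₂)⁻¹ * k) = (x : G → Bool) (g₂⁻¹ * (g₁⁻¹ * k))
      rw [mul_inv_rev, mul_assoc])

lemma tauPerm_continuous [Group G] (g : G) :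
    Continuous (tauPerm (G := G) g) := by
  show Continuous fun x : ↥(Set.univ : Set (G → Bool)) =>
    (⟨fun k => (x : G → Bool) (g⁻¹ * k), trivial⟩ : ↥(Set.univ : Set (G → Bool)))
  apply Continuous.subtype_mk
  apply continuous_pi
  intro k
  exact (continuous_apply (g⁻¹ * k)).comp continuous_subtype_val

lemma tauPerm_symm_continuous [Group G] (g : G) :
    Continuous (tauPerm (G := G) g).symm := by
  show Continuous fun x : ↥(Set.univ : Set (G → Bool)) =>
    (⟨fun k => (x : G → Bool) (g * k), trivial⟩ : ↥(Set.univ : Set (G → Bool)))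
  apply Continuous.subtype_mk
  apply continuous_pi
  intro k
  exact (continuous_apply (g * k)).comp continuous_subtype_val

lemma tauHom_injective [Group G] : Function.Injective (tauHom (G := G)) := by
  classical
  intro g g' hgg
  have := congrArg (fun (e : Equiv.Perm ↥(Set.univ : Set (G → Bool))) =>
    ((e ⟨fun k => decide (k = g⁻¹), trivial⟩ : ↥(Set.univ : Set (G → Bool))) : G → Bool) 1) hgg
  simp only [tauHom, MonoidHom.coe_mk, OneHom.coe_mk, tauPerm, Equiv.coe_fn_mk] at this
  simp only [mul_one, decide_eq_true_eq] at this
  have h2 : g'⁻¹ = g⁻¹ := by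
    by_contra hne
    simp [hne] at this
  exact inv_injective h2.symm

/-- If the automorphism group of every `G`-SFT (over every finite alphabet)
is locally finite, then `G` is locally finite. -/
theorem locallyFinite_of_aut_locallyFinite [Group G]
    (h : ∀ (A : Type) [Fintype A] [Nonempty A] [TopologicalSpace A] [DiscreteTopology A]
      (X : Set (G → A)), IsSFT X →
      ∀ S : Finset (Equiv.Perm X), (∀ φ ∈ S, IsAutomorphism X φ) →
      Finite ↥(Subgroup.closure (S : Set (Equiv.Perm X)))) :
    IsLocallyFinite G := by
  classical
  intro S
  set X : Set (G → Bool) := Set.univ with hX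
  have hSFT : IsSFT X := by
    refine ⟨∅, ∅, ?_⟩
    ext x; simp [hX]
  set T : Finset (Equiv.Perm X) := S.image tauHom with hT
  have hAut : ∀ φ ∈ T, IsAutomorphism X φ := by
    intro φ hφ
    simp only [hT, Finset.mem_image] at hφ
    obtain ⟨g, -, rfl⟩ := hφ
    refine ⟨?_, ?_, ?_⟩
    · exact tauPerm_continuous g
    · exact tauPerm_symm_continuous g
    · intro g' x y hy
      funext k
      show (y : G → Bool) (g⁻¹ * k) = ((x : G → Bool) (g⁻¹ * (k * g')))
      rw [hy]
      show (x : G → Bool) (g⁻¹ * k * g') = (x : G → Bool) (g⁻¹ * (k * g'))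
      rw [mul_assoc]
  have hfin : Finite ↥(Subgroup.closure (T : Set (Equiv.Perm X))) :=
    h Bool X hSFT T hAut
  have hmap : ∀ x ∈ Subgroup.closure (S : Set G),
      tauHom x ∈ Subgroup.closure (T : Set (Equiv.Perm X)) := by
    intro x hx
    have : tauHom x ∈ Subgroup.map tauHom (Subgroup.closure (S : Set G)) :=
      Subgroup.mem_map_of_mem _ hx
    rw [MonoidHom.map_closure] at this
    refine Subgroup.closure_mono ?_ this
    intro y hy
    obtain ⟨g, hg, rfl⟩ := hy
    exact Finset.mem_coe.2 (Finset.mem_image_of_mem _ hg)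
  refine Finite.of_injective
    (fun x : ↥(Subgroup.closure (S : Set G)) =>
      (⟨tauHom x, hmap x x.2⟩ : ↥(Subgroup.closure (T : Set (Equiv.Perm X)))))
    ?_
  intro a b hab
  exact Subtype.ext (tauHom_injective (congrArg Subtype.val hab))

end LFPaper
end

section
/- Let G be a countable group admitting a Følner sequence (i.e., countable amenable), and suppose G is not locally finite. Then there exists a G-SFT X ⊆ (Fin 2)^G containing at least two configurations such that for every Følner sequence {F_n} for G, log|L_{F_n}(X)| / |F_n| → 0; that is, X has zero topological entropy but is not a single point. -/
open scoped Pointwise symmDiff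

namespace LFPaper

variable {G A B : Type*}

section Aux
variable [Group G]

lemma const_on_coset {S : Finset G} {x : G → Fin 2}
    (hx : ∀ s ∈ S, ∀ g : G, x (s * g) = x g) :
    ∀ h ∈ Subgroup.closure (S : Set G), ∀ g : G, x (h * g) = x g := by
  intro h hh
  induction hh using Subgroup.closure_induction with
  | mem s hs => exact hx s hs
  | one => intro g; rw [one_mul]
  | mul a b _ _ ha hb => intro g; rw [mul_assoc]; rw [ha, hb]
  | inv a _ ha =>
    intro g
    have := ha (a⁻¹ * g)
    rw [← mul_assoc, mul_inv_cancel, one_mul] at this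
    exact this.symm

/-- Key constancy: an `X`-point is determined on a coset by any one value. -/
lemma coset_eq {H : Subgroup G} {x : G → Fin 2}
    (hx : ∀ h ∈ H, ∀ g : G, x (h * g) = x g) {a b : G}
    (hab : Quotient.mk (QuotientGroup.rightRel H) a = Quotient.mk (QuotientGroup.rightRel H) b) :
    x a = x b := by
  have h : b * a⁻¹ ∈ H := QuotientGroup.rightRel_apply.mp (Quotient.exact hab)
  have := hx _ h a
  rw [inv_mul_cancel_right] at this
  exact this.symm

lemma langCard_le_pow {H : Subgroup G} {X : Set (G → Fin 2)}
    (hX : ∀ x ∈ X, ∀ h ∈ H, ∀ g : G, x (h * g) = x g) (F : Finset G) :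
    langCard X F ≤
      2 ^ (Set.ncard (Quotient.mk (QuotientGroup.rightRel H) '' (F : Set G))) := by
  classical
  set q : G → Quotient (QuotientGroup.rightRel H) := Quotient.mk _ with hq
  set Q : Set (Quotient (QuotientGroup.rightRel H)) := q '' (F : Set G) with hQ
  have hQfin : Q.Finite := (F.finite_toSet).image _
  haveI : Finite Q := hQfin.to_subtype
  have rep : ∀ c : Q, ∃ a : G, a ∈ F ∧ q a = c := by
    rintro ⟨c, a, ha, rfl⟩; exact ⟨a, ha, rfl⟩
  choose r hrF hrq using rep
  set Φ : (F → Fin 2) → (Q → Fin 2) := fun w c => w ⟨r c, hrF c⟩ with hΦ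
  have hinj : Set.InjOn Φ (language X F) := by
    rintro w ⟨x, hxX, rfl⟩ w' ⟨x', hx'X, rfl⟩ h
    funext a
    have hc : q (a : G) ∈ Q := ⟨a, a.2, rfl⟩
    have h1 : x (a : G) = x (r ⟨_, hc⟩) :=
      coset_eq (hX x hxX) (hrq ⟨_, hc⟩).symm
    have h2 : x' (a : G) = x' (r ⟨_, hc⟩) :=
      coset_eq (hX x' hx'X) (hrq ⟨_, hc⟩).symm
    have := congrFun h ⟨_, hc⟩
    simpa [restrictF, Φ, h1, h2] using this
  have hfin : (language X F).Finite := Set.toFinite _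
  calc langCard X F = Nat.card (language X F) := (Nat.card_coe_set_eq _).symm
    _ ≤ Nat.card (Q → Fin 2) := by
        haveI : Finite (Q → Fin 2) := inferInstance
        exact Nat.card_le_card_of_injective
          (fun w => Φ w.1) (fun w w' h => Subtype.ext (hinj w.2 w'.2 h))
    _ = 2 ^ Q.ncard := by
        rw [Nat.card_fun, Nat.card_coe_set_eq, Nat.card_eq_fintype_card, Fintype.card_fin]

lemma mk_mul_left {H : Subgroup G} {k : G} (hk : k ∈ H) (g : G) :
    Quotient.mk (QuotientGroup.rightRel H) (k * g) = Quotient.mk (QuotientGroup.rightRel H) g := by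
  refine Quotient.sound (QuotientGroup.rightRel_apply.mpr ?_)
  have : g * (k * g)⁻¹ = k⁻¹ := by group
  rw [this]; exact H.inv_mem hk

lemma coset_count_le [DecidableEq G] {H : Subgroup G} (K : Finset G)
    (hKH : (K : Set G) ⊆ (H : Set G)) (F : Finset G) :
    Set.ncard (Quotient.mk (QuotientGroup.rightRel H) '' (F : Set G)) * K.card ≤
      F.card + (F.filter (fun g => ¬ ∀ k ∈ K, k * g ∈ F)).card * K.card := by
  classical
  set q : G → Quotient (QuotientGroup.rightRel H) := Quotient.mk _ with hq
  set Good : Finset G := F.filter (fun g => ∀ k ∈ K, k * g ∈ F) with hGood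
  set Bad : Finset G := F.filter (fun g => ¬ ∀ k ∈ K, k * g ∈ F) with hBad
  have hsplit : q '' (F : Set G) ⊆ q '' (Good : Set G) ∪ q '' (Bad : Set G) := by
    rintro c ⟨a, ha, rfl⟩
    by_cases h : ∀ k ∈ K, k * a ∈ F
    · exact Or.inl ⟨a, Finset.mem_coe.mpr (Finset.mem_filter.mpr ⟨Finset.mem_coe.mp ha, h⟩), rfl⟩
    · exact Or.inr ⟨a, Finset.mem_coe.mpr (Finset.mem_filter.mpr ⟨Finset.mem_coe.mp ha, h⟩), rfl⟩
  have h1 : Set.ncard (q '' (F : Set G)) ≤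
      Set.ncard (q '' (Good : Set G)) + Bad.card := by
    calc Set.ncard (q '' (F : Set G)) ≤ Set.ncard (q '' (Good : Set G) ∪ q '' (Bad : Set G)) :=
          Set.ncard_le_ncard hsplit (((Good.finite_toSet.image q).union
            (Bad.finite_toSet.image q)))
      _ ≤ Set.ncard (q '' (Good : Set G)) + Set.ncard (q '' (Bad : Set G)) :=
          Set.ncard_union_le _ _
      _ ≤ Set.ncard (q '' (Good : Set G)) + Bad.card := by
          gcongr
          rw [← Set.ncard_coe_finset Bad]
          exact Set.ncard_image_le Bad.finite_toSet
  have h2 : Set.ncard (q '' (Good : Set G)) * K.card ≤ F.card := by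
    rw [← Finset.coe_image, Set.ncard_coe_finset]
    set rep : Quotient (QuotientGroup.rightRel H) → G :=
      fun c => if h : ∃ g ∈ Good, q g = c then h.choose else 1 with hrep
    have hrep1 : ∀ c ∈ Good.image q, rep c ∈ Good ∧ q (rep c) = c := by
      intro c hc
      obtain ⟨g, hg, hgc⟩ := Finset.mem_image.mp hc
      have h : ∃ g ∈ Good, q g = c := ⟨g, hg, hgc⟩
      simp only [hrep, dif_pos h]
      exact ⟨h.choose_spec.1, h.choose_spec.2⟩
    have := Finset.card_le_card_of_injOn (f := fun p : _ × G => p.2 * rep p.1)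
      (s := (Good.image q) ×ˢ K) (t := F) ?_ ?_
    · simpa [Finset.card_product, mul_comm] using this
    · rintro ⟨c, k⟩ hp
      obtain ⟨hc, hk⟩ := Finset.mem_product.mp hp
      obtain ⟨hrg, -⟩ := hrep1 c hc
      exact (Finset.mem_filter.mp hrg).2 k hk
    · rintro ⟨c, k⟩ hp ⟨c', k'⟩ hp' heq
      obtain ⟨hc, hk⟩ := Finset.mem_product.mp (Finset.mem_coe.mp hp)
      obtain ⟨hc', hk'⟩ := Finset.mem_product.mp (Finset.mem_coe.mp hp')
      have e1 : q (k * rep c) = c :=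
        (mk_mul_left (hKH hk) (rep c)).trans (hrep1 c hc).2
      have e2 : q (k' * rep c') = c' :=
        (mk_mul_left (hKH hk') (rep c')).trans (hrep1 c' hc').2
      have hcc : c = c' := by rw [← e1, ← e2]; exact congrArg q heq
      subst hcc
      have hkk : k = k' := by simpa using heq
      simp [hkk]
  calc Set.ncard (q '' (F : Set G)) * K.card
      ≤ (Set.ncard (q '' (Good : Set G)) + Bad.card) * K.card := by gcongr
    _ = Set.ncard (q '' (Good : Set G)) * K.card + Bad.card * K.card := by ring
    _ ≤ F.card + Bad.card * K.card := by gcongr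

lemma bad_card_le [DecidableEq G] (K : Finset G) (F : Finset G) :
    (F.filter (fun g => ¬ ∀ k ∈ K, k * g ∈ F)).card ≤
      ∑ k ∈ K, Set.ncard ((((fun h => k * h) '' (F : Set G))) ∆ (F : Set G)) := by
  classical
  have hsub : F.filter (fun g => ¬ ∀ k ∈ K, k * g ∈ F) ⊆
      K.biUnion (fun k => F.filter (fun g => k * g ∉ F)) := by
    intro g hg
    obtain ⟨hgF, h⟩ := Finset.mem_filter.mp hg
    push_neg at h
    obtain ⟨k, hk, hkg⟩ := h
    exact Finset.mem_biUnion.mpr ⟨k, hk, Finset.mem_filter.mpr ⟨hgF, hkg⟩⟩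
  calc (F.filter (fun g => ¬ ∀ k ∈ K, k * g ∈ F)).card
      ≤ (K.biUnion (fun k => F.filter (fun g => k * g ∉ F))).card :=
        Finset.card_le_card hsub
    _ ≤ ∑ k ∈ K, (F.filter (fun g => k * g ∉ F)).card := Finset.card_biUnion_le
    _ ≤ ∑ k ∈ K, Set.ncard ((((fun h => k * h) '' (F : Set G))) ∆ (F : Set G)) := by
        refine Finset.sum_le_sum (fun k _ => ?_)
        have himg : ((F.filter (fun g => k * g ∉ F)).image (fun g => k * g)) ⊆
            (F.image (fun g => k * g)) ∆ F := by
          intro a ha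
          obtain ⟨g, hg, rfl⟩ := Finset.mem_image.mp ha
          obtain ⟨hgF, hkg⟩ := Finset.mem_filter.mp hg
          rw [Finset.mem_symmDiff]
          exact Or.inl ⟨Finset.mem_image_of_mem _ hgF, hkg⟩
        have : ((fun h => k * h) '' (F : Set G)) ∆ (F : Set G) =
            ((F.image (fun g => k * g)) ∆ F : Finset G) := by
          rw [Finset.coe_symmDiff, Finset.coe_image]
        rw [this, Set.ncard_coe_finset]
        calc (F.filter (fun g => k * g ∉ F)).card
            = ((F.filter (fun g => k * g ∉ F)).image (fun g => k * g)).card :=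
              (Finset.card_image_of_injective _ (mul_right_injective k)).symm
          _ ≤ _ := Finset.card_le_card himg

lemma coset_density_tendsto {H : Subgroup G} (hH : (H : Set G).Infinite)
    {F : ℕ → Finset G} (hF : IsFolner F) :
    Filter.Tendsto (fun n =>
      (Set.ncard (Quotient.mk (QuotientGroup.rightRel H) '' ((F n) : Set G)) : ℝ) /
        ((F n).card : ℝ)) Filter.atTop (nhds 0) := by
  classical
  set q : G → Quotient (QuotientGroup.rightRel H) := Quotient.mk _ with hq
  rw [Metric.tendsto_atTop]
  intro ε hε
  obtain ⟨m₀, hm₀⟩ := exists_nat_one_div_lt (half_pos hε)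
  set m : ℕ := m₀ + 1 with hm
  obtain ⟨t, htH, htfin, htcard⟩ := hH.exists_subset_ncard_eq m
  set K : Finset G := htfin.toFinset with hK
  have hKH : (K : Set G) ⊆ (H : Set G) := by
    intro a ha; exact htH (htfin.mem_toFinset.mp ha)
  have hKcard : K.card = m := by
    rw [← htcard, Set.ncard_eq_toFinset_card t htfin]
  have hsum : Filter.Tendsto (fun n => ∑ k ∈ K,
      (Set.ncard ((((fun h => k * h) '' ((F n) : Set G))) ∆ ((F n) : Set G)) : ℝ) /
        ((F n).card : ℝ)) Filter.atTop (nhds 0) := by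
    have := tendsto_finset_sum (s := K)
      (f := fun k n => (Set.ncard ((((fun h => k * h) '' ((F n) : Set G))) ∆ ((F n) : Set G)) : ℝ) /
        ((F n).card : ℝ)) (fun k _ => hF.2.2 k)
    simpa using this
  obtain ⟨N, hN⟩ := Filter.eventually_atTop.mp (hsum.eventually_lt_const (half_pos hε))
  refine ⟨N, fun n hn => ?_⟩
  have hNpos : (0:ℝ) < ((F n).card : ℝ) := by exact_mod_cast (hF.1 n).card_pos
  set Nr : ℝ := ((F n).card : ℝ)
  set c : ℝ := (Set.ncard (q '' ((F n) : Set G)) : ℝ)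
  set B : ℝ := (((F n).filter (fun g => ¬ ∀ k ∈ K, k * g ∈ F n)).card : ℝ)
  set D : ℝ := ∑ k ∈ K,
      (Set.ncard ((((fun h => k * h) '' ((F n) : Set G))) ∆ ((F n) : Set G)) : ℝ)
  have hmR : (0:ℝ) < (m : ℝ) := by positivity
  have h1 : c * (m : ℝ) ≤ Nr + B * (m : ℝ) := by
    have h := coset_count_le (H := H) K hKH (F n)
    rw [hKcard] at h
    calc c * (m : ℝ)
        = ((Set.ncard (Quotient.mk (QuotientGroup.rightRel H) '' ((F n) : Set G)) * m : ℕ) : ℝ) :=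
          (Nat.cast_mul _ _).symm
      _ ≤ (((F n).card + ((F n).filter (fun g => ¬ ∀ k ∈ K, k * g ∈ F n)).card * m : ℕ) : ℝ) :=
          (Nat.cast_le (α := ℝ)).mpr h
      _ = Nr + B * (m : ℝ) := by rw [Nat.cast_add, Nat.cast_mul]
  have h2 : B ≤ D := by
    have h := bad_card_le K (F n)
    have h' := (Nat.cast_le (α := ℝ)).mpr h
    rw [Nat.cast_sum] at h'
    exact h'
  have h3 : D / Nr < ε / 2 := by
    have := hN n hn
    rw [← Finset.sum_div] at this
    exact this
  have h3' : D < ε / 2 * Nr := by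
    rw [div_lt_iff₀ hNpos] at h3; linarith [h3]
  have h4 : (1:ℝ) < ε / 2 * (m : ℝ) := by
    have : (1:ℝ) / (m : ℝ) < ε / 2 := by
      have : ((m₀ : ℝ) + 1) = (m : ℝ) := by push_cast [hm]; ring
      rw [← this]; exact hm₀
    rw [div_lt_iff₀ hmR] at this; linarith [this]
  rw [Real.dist_eq, sub_zero, abs_of_nonneg (by positivity)]
  rw [div_lt_iff₀ hNpos]
  have hc : c * (m : ℝ) < (ε * Nr) * (m : ℝ) := by
    have hBD : B * (m : ℝ) ≤ D * (m : ℝ) := mul_le_mul_of_nonneg_right h2 hmR.le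
    have hDm : D * (m : ℝ) < (ε / 2 * Nr) * (m : ℝ) := mul_lt_mul_of_pos_right h3' hmR
    have hNm : Nr * 1 < Nr * (ε / 2 * (m : ℝ)) := mul_lt_mul_of_pos_left h4 hNpos
    nlinarith [h1, hBD, hDm, hNm]
  exact lt_of_mul_lt_mul_right hc hmR.le

end Aux

/-- Over a countable amenable group which is not locally finite, there is a
`G`-SFT with at least two points but zero topological entropy. -/
theorem exists_zero_entropy_SFT_not_singleton [Group G] [Countable G]
    (hFol : ∃ F : ℕ → Finset G, IsFolner F) (hLF : ¬ IsLocallyFinite G) :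
    ∃ X : Set (G → Fin 2), IsSFT X ∧ (∃ x ∈ X, ∃ y ∈ X, x ≠ y) ∧
      ∀ F : ℕ → Finset G, IsFolner F →
        Filter.Tendsto (fun n => Real.log (langCard X (F n)) / ((F n).card : ℝ))
          Filter.atTop (nhds 0) := by
  classical
  simp only [IsLocallyFinite, not_forall] at hLF
  obtain ⟨S, hS⟩ := hLF
  set H : Subgroup G := Subgroup.closure (S : Set G) with hH
  have hHinf : ((H : Set G)).Infinite := by
    rw [← Set.infinite_coe_iff]
    exact not_finite_iff_infinite.mp hS
  set X : Set (G → Fin 2) := {x | ∀ s ∈ S, ∀ g : G, x (s * g) = x g} with hX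
  have hXcoset : ∀ x ∈ X, ∀ h ∈ H, ∀ g : G, x (h * g) = x g :=
    fun x hx => const_on_coset hx
  refine ⟨X, ?_, ?_, ?_⟩
  · -- SFT
    refine ⟨insert (1:G) S,
      {w : (insert (1:G) S : Finset G) → Fin 2 | ∃ s : G, ∃ hs : s ∈ S,
        w ⟨s, Finset.mem_insert_of_mem hs⟩ ≠ w ⟨1, Finset.mem_insert_self 1 S⟩}, ?_⟩
    ext x
    simp only [hX, Set.mem_setOf_eq, restrictF, shift]
    constructor
    · intro hx g hP
      obtain ⟨s, hs, hne⟩ := hP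
      exact hne (by simpa [one_mul] using hx s hs g)
    · intro h s hs g
      by_contra hne
      exact h g ⟨s, hs, by simpa [one_mul] using hne⟩
  · -- two points
    refine ⟨(fun _ => 0), ?_, (fun _ => 1), ?_, ?_⟩
    · intro s _ g; rfl
    · intro s _ g; rfl
    · intro h
      exact absurd (congrFun h 1) (by decide)
  · -- zero entropy
    intro F hF
    have hNpos : ∀ n, (0:ℝ) < ((F n).card : ℝ) := fun n => by
      exact_mod_cast (hF.1 n).card_pos
    have hlang1 : ∀ n, 1 ≤ langCard X (F n) := by
      intro n
      have hmem : restrictF (F n) (fun _ => (0 : Fin 2)) ∈ language X (F n) :=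
        ⟨(fun _ => 0), fun s _ g => rfl, rfl⟩
      have hfin : (language X (F n)).Finite := Set.toFinite _
      exact (Set.ncard_pos hfin).mpr ⟨_, hmem⟩
    refine squeeze_zero (g := fun n =>
      Real.log 2 * ((Set.ncard (Quotient.mk (QuotientGroup.rightRel H) ''
        ((F n) : Set G)) : ℝ) / ((F n).card : ℝ))) (fun n => ?_) (fun n => ?_) ?_
    · apply div_nonneg _ (hNpos n).le
      apply Real.log_nonneg
      exact_mod_cast hlang1 n
    · have hle := langCard_le_pow hXcoset (F n)
      have hlog : Real.log (langCard X (F n)) ≤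
          (Set.ncard (Quotient.mk (QuotientGroup.rightRel H) '' ((F n) : Set G)) : ℝ) *
            Real.log 2 := by
        have hb : (langCard X (F n) : ℝ) ≤
            (2:ℝ) ^ (Set.ncard (Quotient.mk (QuotientGroup.rightRel H) '' ((F n) : Set G))) := by
          exact_mod_cast hle
        have h1R : (1:ℝ) ≤ (langCard X (F n) : ℝ) := by exact_mod_cast hlang1 n
        have := Real.log_le_log (by linarith) hb
        rwa [Real.log_pow] at this
      have heq : Real.log 2 *
          ((Set.ncard (Quotient.mk (QuotientGroup.rightRel H) '' ((F n) : Set G)) : ℝ) /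
            ((F n).card : ℝ)) =
          ((Set.ncard (Quotient.mk (QuotientGroup.rightRel H) '' ((F n) : Set G)) : ℝ) *
            Real.log 2) / ((F n).card : ℝ) := by ring
      rw [heq]
      gcongr
    · have := (coset_density_tendsto hHinf hF).const_mul (Real.log 2)
      simpa using this

end LFPaper
end
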